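/- Reduction of the symmetry system on bCPE (Lemma 2): let χ⁰₁, χ⁰, χ¹ ∈ A(bCPE) and let χ^{i¹}_α ∈ A(bCPE) (i¹ ∈ ℕ₀, α ∈ N) be a family with only finitely many nonzero members. Then the system D₁χ⁰₁ + 2Σ_{α∈N} D_α(u^α_{e₁} χ¹) = 0; D₁χ^{i¹}_α + δ^{i¹}₀ D_α χ⁰₁ + χ^{i¹−1}_α + 2( δ^{i¹}₀ D_α(Σ_{β∈N} u^β_{e_β} χ¹) − δ^{i¹}₁ u¹_{e_α} χ¹ + δ^{i¹}₀ Σ_{β∈N} D_β(u^β_{e_α} χ¹) ) = 0 for all i¹ ∈ ℕ₀, α ∈ N (with χ^{−1}_α := 0); D₁χ⁰ − Δ′χ¹ = 0; and D₁χ¹ + χ⁰ = 0, is equivalent to: χ⁰_α = 2 u¹_{e_α} χ¹ and χ^{i¹}_α = 0 for all i¹ ≥ 1 and α ∈ N, χ⁰ = −D₁χ¹, where χ¹ and χ⁰₁ satisfy Δχ¹ = 0, (Σ_{μ∈M} u^μ_{e₁} D_μ D_α − Σ_{μ∈M} u^μ_{e_α} D_μ D₁)χ¹ = 0 for all α ∈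 N, D₁χ⁰₁ = −2 Σ_{α∈N} D_α(u^α_{e₁} χ¹), and D_α χ⁰₁ = −2( Σ_{μ∈M} u^μ_{e_α} D_μ χ¹ + D_α(Σ_{β∈N} u^β_{e_β} χ¹) ) for all α ∈ N. Here Δ = Σ_{μ∈M} D_μ∘D_μ, Δ′ = Σ_{α∈N} D_α∘D_α, δ is the Kronecker delta, and u¹_{e₁} denotes the substituted function −Σ_{α∈N} u^α_{e_α}. -/

import Mathlib

/-!
The constrained jet space `bCPE = ℝ^m × ℝ^{I₀} × (ℝ^N)^I × ℝ^{I₁}` (global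
coordinates on the solution manifold of the continuity and Poisson constraints),
with `I = ℕ^m`, `I₀ = {i : i¹ = 0}`, `I₁ = {i : i¹ ≤ 1}`, `N = {2,…,m}`.
-/

/-- Multi-indices `I = ℕ^m`. -/
abbrev MIdx (m : ℕ) := Fin m → ℕ

/-- The coordinates on `bCPE`. -/
inductive CP (m : ℕ) [NeZero m] where
  | x : Fin m → CP m
  | u1 : {i : MIdx m // i 0 = 0} → CP m
  | uN : {α : Fin m // α ≠ 0} → MIdx m → CP m
  | p : {i : MIdx m // i 0 ≤ 1} → CP m
deriving DecidableEq

/-- The constrained jet space `bCPE`. -/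
abbrev BCPE (m : ℕ) [NeZero m] := CP m → ℝ

/-- Partial derivative of `f : (C → ℝ) → ℝ` along the coordinate `c`. -/
noncomputable def pd {C : Type*} [DecidableEq C] (c : C) (f : (C → ℝ) → ℝ)
    (z : C → ℝ) : ℝ :=
  deriv (fun t : ℝ => f (Function.update z c t)) (z c)

/-- A function `f : (C → ℝ) → ℝ` is a finite-order smooth function if it factors
as a smooth function of finitely many of the coordinates. -/
def FinOrd {C : Type*} (f : (C → ℝ) → ℝ) : Prop :=
  ∃ (s : Finset C) (g : ({c // c ∈ s} → ℝ) → ℝ),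
    ContDiff ℝ (⊤ : ℕ∞) g ∧ ∀ z : C → ℝ, f z = g fun c => z c.1

/-- The extension of `u¹` to all multi-indices `i ∈ I`: for `i ∈ I₀` it is the
coordinate `u¹_i`, and `u¹_{j+e₁} := -Σ_{α∈N} u^α_{j+e_α}` otherwise. -/
noncomputable def u1fun {m : ℕ} [NeZero m] (i : MIdx m) : BCPE m → ℝ :=
  if h : i 0 = 0 then fun z => z (CP.u1 ⟨i, h⟩)
  else fun z => -∑ α : {α : Fin m // α ≠ 0},
    z (CP.uN α (Function.update i 0 (i 0 - 1) + Pi.single (α : Fin m) 1))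

/-- The coordinate function `u^μ_i` on `bCPE`, where for `μ = 1` the substituted
function `u1fun` is used. -/
noncomputable def uAll {m : ℕ} [NeZero m] (μ : Fin m) (i : MIdx m) : BCPE m → ℝ :=
  if h : μ = 0 then u1fun i else fun z => z (CP.uN ⟨μ, h⟩ i)

/-- The product of binomial coefficients `C(i,k) = Π_ν binom(i_ν, k_ν)`. -/
def multiChoose {m : ℕ} (i k : MIdx m) : ℕ := ∏ ν : Fin m, (i ν).choose (k ν)

/-- Fuel-based implementation of the recursive extension of `p` to all of `I`:
for `i ∈ I₁` it is the coordinate `p_i`, and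
`p_{j+2e₁} := -Σ_{α∈N} p_{j+2e_α} - Σ_{k+l=j} C(j,k) Σ_{λ,μ} u^λ_{k+e_μ} u^μ_{l+e_λ}`
otherwise (the fuel `n ≥ i¹` is consumed by one on each recursive step, while
`i¹` drops by two, so the fuel never runs out when started at `n = i¹`). -/
noncomputable def pAux {m : ℕ} [NeZero m] : ℕ → MIdx m → BCPE m → ℝ
  | 0, i => if h : i 0 ≤ 1 then (fun z => z (CP.p ⟨i, h⟩)) else 0
  | n + 1, i =>
    if h : i 0 ≤ 1 then fun z => z (CP.p ⟨i, h⟩)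
    else fun z =>
      -(∑ α : {α : Fin m // α ≠ 0},
          pAux n (Function.update i 0 (i 0 - 2) + Pi.single (α : Fin m) 2) z)
      - ∑ k ∈ Finset.Iic (Function.update i 0 (i 0 - 2)),
          (multiChoose (Function.update i 0 (i 0 - 2)) k : ℝ) *
            ∑ lam : Fin m, ∑ μ : Fin m,
              uAll lam (k + Pi.single μ 1) z *
                uAll μ ((Function.update i 0 (i 0 - 2) - k) + Pi.single lam 1) z

/-- The extension of `p` to all multi-indices `i ∈ I`. -/
noncomputable def pAllFun {m : ℕ} [NeZero m] (i : MIdx m) : BCPE m → ℝ :=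
  pAux (i 0) i

/-- The total derivative `D_μ` on the constrained jet space `bCPE`. -/
noncomputable def Dcpe {m : ℕ} [NeZero m] (μ : Fin m) (f : BCPE m → ℝ) :
    BCPE m → ℝ := fun z =>
  pd (CP.x μ) f z
    + ∑ᶠ i : {i : MIdx m // i 0 = 0},
        u1fun (i.1 + Pi.single μ 1) z * pd (CP.u1 i) f z
    + ∑ᶠ (α : {α : Fin m // α ≠ 0}) (i : MIdx m),
        z (CP.uN α (i + Pi.single μ 1)) * pd (CP.uN α i) f z
    + ∑ᶠ i : {i : MIdx m // i 0 ≤ 1},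
        pAllFun (i.1 + Pi.single μ 1) z * pd (CP.p i) f z

/-! ## Auxiliary theory -/

set_option linter.unusedSectionVars false

section Generic
open Function
variable {C : Type*} [DecidableEq C]

/-- restriction of `z` to the coordinates in `s`. -/
def restr (s : Finset C) (z : C → ℝ) : {c // c ∈ s} → ℝ := fun c => z c.1

def IsRep (s : Finset C) (f : (C → ℝ) → ℝ) : Prop :=
  ∃ g : ({c // c ∈ s} → ℝ) → ℝ, ContDiff ℝ (⊤ : ℕ∞) g ∧ ∀ z, f z = g (restr s z)

lemma isRep_finOrd {s : Finset C} {f} (h : IsRep s f) : FinOrd f := by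
  obtain ⟨g, hg, hfg⟩ := h; exact ⟨s, g, hg, hfg⟩

lemma finOrd_isRep {f : (C → ℝ) → ℝ} (h : FinOrd f) : ∃ s, IsRep s f := by
  obtain ⟨s, g, hg, hfg⟩ := h; exact ⟨s, g, hg, hfg⟩

lemma restr_comp_smooth {s s' : Finset C} (hs : s ⊆ s') :
    ContDiff ℝ (⊤ : WithTop ℕ∞)
      (fun (y : {c // c ∈ s'} → ℝ) (c : {c // c ∈ s}) => y ⟨c.1, hs c.2⟩) :=
  contDiff_pi.mpr fun c => contDiff_apply ℝ ℝ (⟨c.1, hs c.2⟩ : {c // c ∈ s'})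

lemma IsRep.mono {s s' : Finset C} {f} (h : IsRep s f) (hs : s ⊆ s') : IsRep s' f := by
  obtain ⟨g, hg, hfg⟩ := h
  exact ⟨fun y => g (fun c => y ⟨c.1, hs c.2⟩), hg.comp ((restr_comp_smooth hs).of_le le_top),
    fun z => hfg z⟩

lemma IsRep.const (s : Finset C) (a : ℝ) : IsRep s (fun _ => a) :=
  ⟨fun _ => a, contDiff_const, fun _ => rfl⟩

lemma IsRep.add {s : Finset C} {f g} (hf : IsRep s f) (hg : IsRep s g) :
    IsRep s (fun z => f z + g z) := by
  obtain ⟨F, hF, hfF⟩ := hf; obtain ⟨G, hG, hgG⟩ := hg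
  exact ⟨fun y => F y + G y, hF.add hG, fun z => by simp only [hfF, hgG]⟩

lemma IsRep.neg {s : Finset C} {f} (hf : IsRep s f) : IsRep s (fun z => -f z) := by
  obtain ⟨F, hF, hfF⟩ := hf
  exact ⟨fun y => -F y, hF.neg, fun z => by simp only [hfF]⟩

lemma IsRep.mul {s : Finset C} {f g} (hf : IsRep s f) (hg : IsRep s g) :
    IsRep s (fun z => f z * g z) := by
  obtain ⟨F, hF, hfF⟩ := hf; obtain ⟨G, hG, hgG⟩ := hg
  exact ⟨fun y => F y * G y, hF.mul hG, fun z => by simp only [hfF, hgG]⟩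

lemma IsRep.sub {s : Finset C} {f g} (hf : IsRep s f) (hg : IsRep s g) :
    IsRep s (fun z => f z - g z) := by
  obtain ⟨F, hF, hfF⟩ := hf; obtain ⟨G, hG, hgG⟩ := hg
  exact ⟨fun y => F y - G y, hF.sub hG, fun z => by simp only [hfF, hgG]⟩

lemma IsRep.finsetSum {s : Finset C} {ι : Type*} {t : Finset ι} {F : ι → (C → ℝ) → ℝ}
    (hF : ∀ a ∈ t, IsRep s (F a)) : IsRep s (fun z => ∑ a ∈ t, F a z) := by
  classical
  induction t using Finset.induction with
  | empty => simpa using IsRep.const s 0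
  | insert a t hnot ih =>
    have h1 : IsRep s (F a) := hF a (Finset.mem_insert_self a t)
    have h2 : IsRep s (fun z => ∑ b ∈ t, F b z) :=
      ih fun b hb => hF b (Finset.mem_insert_of_mem hb)
    have := h1.add h2
    simp only [Finset.sum_insert hnot]
    exact this

lemma isRep_coord {s : Finset C} {c : C} (hc : c ∈ s) : IsRep s (fun z => z c) :=
  ⟨fun y => y ⟨c, hc⟩, contDiff_apply ℝ ℝ _, fun z => rfl⟩

lemma FinOrd.exists_isRep {f : (C → ℝ) → ℝ} (hf : FinOrd f) (t : Finset C) :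
    ∃ s : Finset C, t ⊆ s ∧ IsRep s f := by
  obtain ⟨s₀, hs₀⟩ := finOrd_isRep hf
  exact ⟨s₀ ∪ t, Finset.subset_union_right, hs₀.mono Finset.subset_union_left⟩

/-! ### slices -/

lemma restr_update_mem {s : Finset C} {c : C} (hc : c ∈ s) (z : C → ℝ) (t : ℝ) :
    restr s (Function.update z c t) = Function.update (restr s z) ⟨c, hc⟩ t := by
  funext d
  rcases eq_or_ne d ⟨c, hc⟩ with h | h
  · subst h; simp [restr]
  · have hd : d.1 ≠ c := fun hh => h (Subtype.ext hh)
    simp [restr, Function.update_of_ne hd, Function.update_of_ne h]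

lemma restr_update_not_mem {s : Finset C} {c : C} (hc : c ∉ s) (z : C → ℝ) (t : ℝ) :
    restr s (Function.update z c t) = restr s z := by
  funext d
  have hd : d.1 ≠ c := fun hh => hc (hh ▸ d.2)
  simp [restr, Function.update_of_ne hd]

lemma hasDerivAt_update' {ι : Type*} [DecidableEq ι] [Fintype ι] (y : ι → ℝ) (c : ι) (t₀ : ℝ) :
    HasDerivAt (fun t => Function.update y c t) (Pi.single c 1) t₀ := by
  have h : (fun t : ℝ => Function.update y c t)
      = fun t => y + (t - y c) • (Pi.single c 1 : ι → ℝ) := by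
    funext t; funext d
    rcases eq_or_ne d c with h | h
    · subst h; simp
    · simp [Function.update_of_ne h, Pi.single_eq_of_ne h]
  rw [h]
  simpa using (((hasDerivAt_id t₀).sub_const (y c)).smul_const (Pi.single c 1 : _)).const_add y

lemma pd_rep_mem {s : Finset C} {g : ({c // c ∈ s} → ℝ) → ℝ} {f : (C → ℝ) → ℝ}
    (hg : ContDiff ℝ (⊤ : ℕ∞) g) (hfg : ∀ z, f z = g (restr s z)) {c : C} (hc : c ∈ s) (z : C → ℝ) :
    pd c f z = fderiv ℝ g (restr s z) (Pi.single ⟨c, hc⟩ 1) := by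
  have hslice : (fun t : ℝ => f (Function.update z c t))
      = fun t => g (Function.update (restr s z) ⟨c, hc⟩ t) := by
    funext t; rw [hfg, restr_update_mem hc]
  have h1 : HasDerivAt (fun t => g (Function.update (restr s z) ⟨c, hc⟩ t))
      (fderiv ℝ g (restr s z) (Pi.single ⟨c, hc⟩ 1)) (z c) := by
    have h4 : Function.update (restr s z) ⟨c, hc⟩ (z c) = restr s z :=
      Function.update_eq_self _ _
    have h3 : HasFDerivAt g (fderiv ℝ g (restr s z))
        (Function.update (restr s z) ⟨c, hc⟩ (z c)) := by
      rw [h4]; exact (hg.differentiable (by simp) _).hasFDerivAt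
    have := h3.comp_hasDerivAt (z c) (hasDerivAt_update' (restr s z) ⟨c, hc⟩ (z c))
    exact this
  rw [pd, hslice]
  exact h1.deriv

lemma pd_rep_not_mem {s : Finset C} {g : ({c // c ∈ s} → ℝ) → ℝ} {f : (C → ℝ) → ℝ}
    (hfg : ∀ z, f z = g (restr s z)) {c : C} (hc : c ∉ s) (z : C → ℝ) :
    pd c f z = 0 := by
  have hslice : (fun t : ℝ => f (Function.update z c t)) = fun _ => f z := by
    funext t; rw [hfg, restr_update_not_mem hc, hfg]
  rw [pd, hslice, deriv_const]

lemma IsRep.pd_eq_zero {s : Finset C} {f} (hf : IsRep s f) {c : C} (hc : c ∉ s) (z : C → ℝ) :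
    pd c f z = 0 := by
  obtain ⟨g, hg, hfg⟩ := hf; exact pd_rep_not_mem hfg hc z

lemma isRep_pd {s : Finset C} {f} (hf : IsRep s f) (c : C) : IsRep s (pd c f) := by
  obtain ⟨g, hg, hfg⟩ := hf
  by_cases hc : c ∈ s
  · refine ⟨fun y => fderiv ℝ g y (Pi.single ⟨c, hc⟩ 1), ?_, fun z => pd_rep_mem hg hfg hc z⟩
    exact (hg.fderiv_right (by simp)).clm_apply contDiff_const
  · exact ⟨fun _ => 0, contDiff_const, fun z => pd_rep_not_mem hfg hc z⟩

lemma pd_const (c : C) (a : ℝ) (z : C → ℝ) : pd c (fun _ => a) z = 0 := by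
  simp [pd]

lemma pd_coord (c c' : C) (z : C → ℝ) :
    pd c (fun z => z c') z = if c' = c then 1 else 0 := by
  rcases eq_or_ne c' c with h | h
  · subst h
    have : (fun t : ℝ => Function.update z c' t c') = fun t => t := by
      funext t; simp
    simp [pd, this]
  · have : (fun t : ℝ => Function.update z c t c') = fun _ => z c' := by
      funext t; simp [Function.update_of_ne h]
    simp [pd, this, h]

/-- Schwarz' theorem for repeated `pd` on finite-order functions. -/
lemma IsRep.pd_comm {s : Finset C} {f} (hf : IsRep s f) (c c' : C) (z : C → ℝ) :
    pd c (pd c' f) z = pd c' (pd c f) z := by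
  obtain ⟨g, hg, hfg⟩ := hf
  by_cases hc : c ∈ s
  · by_cases hc' : c' ∈ s
    · -- both in `s`: reduce to symmetry of the second derivative of `g`
      have hdg : Differentiable ℝ g := hg.differentiable (by simp)
      have hdg2 : Differentiable ℝ (fderiv ℝ g) :=
        (hg.fderiv_right (m := (⊤ : ℕ∞)) (by simp)).differentiable (by simp)
      have key : ∀ (d : C) (hd : d ∈ s) (d' : C) (hd' : d' ∈ s),
          pd d (pd d' f) z
            = fderiv ℝ (fderiv ℝ g) (restr s z) (Pi.single ⟨d, hd⟩ 1) (Pi.single ⟨d', hd'⟩ 1) := by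
        intro d hd d' hd'
        have hrep : ∀ w, pd d' f w = (fun y => fderiv ℝ g y (Pi.single ⟨d', hd'⟩ 1)) (restr s w) :=
          fun w => pd_rep_mem hg hfg hd' w
        have hsm : ContDiff ℝ (⊤ : ℕ∞) (fun y => fderiv ℝ g y (Pi.single (⟨d', hd'⟩ : {c // c ∈ s}) 1)) :=
          (hg.fderiv_right (by simp)).clm_apply contDiff_const
        rw [pd_rep_mem hsm hrep hd z]
        rw [fderiv_clm_apply (hdg2 _) (differentiableAt_const _)]
        simp
      rw [key c hc c' hc', key c' hc' c hc]
      exact second_derivative_symmetric (fun y => (hdg y).hasFDerivAt)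
        (hdg2 (restr s z)).hasFDerivAt _ _
    · -- `c' ∉ s`: both sides vanish
      have h1 : pd c' f = fun _ => 0 := by
        funext w; exact pd_rep_not_mem hfg hc' w
      rw [h1, pd_const]
      exact ((isRep_pd ⟨g, hg, hfg⟩ c).pd_eq_zero hc' z).symm
  · have h1 : pd c f = fun _ => 0 := by
      funext w; exact pd_rep_not_mem hfg hc w
    rw [h1, pd_const]
    exact (isRep_pd ⟨g, hg, hfg⟩ c').pd_eq_zero hc z

lemma FinOrd.hasDerivAt {f : (C → ℝ) → ℝ} (hf : FinOrd f) (c : C) (z : C → ℝ) :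
    HasDerivAt (fun t => f (Function.update z c t)) (pd c f z) (z c) := by
  obtain ⟨s, g, hg, hfg₀⟩ := hf
  have hfg : ∀ z, f z = g (restr s z) := hfg₀
  by_cases hc : c ∈ s
  · have h1 : HasDerivAt (fun t => g (Function.update (restr s z) ⟨c, hc⟩ t))
        (fderiv ℝ g (restr s z) (Pi.single ⟨c, hc⟩ 1)) (z c) := by
      have h4 : Function.update (restr s z) ⟨c, hc⟩ (z c) = restr s z :=
        Function.update_eq_self _ _
      have h3 : HasFDerivAt g (fderiv ℝ g (restr s z))
          (Function.update (restr s z) ⟨c, hc⟩ (z c)) := by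
        rw [h4]; exact (hg.differentiable (by simp) _).hasFDerivAt
      have := h3.comp_hasDerivAt (z c) (hasDerivAt_update' (restr s z) ⟨c, hc⟩ (z c))
      exact this
    have hslice : (fun t : ℝ => f (Function.update z c t))
        = fun t => g (Function.update (restr s z) ⟨c, hc⟩ t) := by
      funext t; rw [hfg, restr_update_mem hc]
    rw [pd_rep_mem hg hfg hc z, hslice]
    exact h1
  · have hslice : (fun t : ℝ => f (Function.update z c t)) = fun _ => f z := by
      funext t; rw [hfg, restr_update_not_mem hc, ← hfg]
    rw [pd_rep_not_mem hfg hc z, hslice]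
    exact hasDerivAt_const _ _

lemma pd_add {f g : (C → ℝ) → ℝ} (hf : FinOrd f) (hg : FinOrd g) (c : C) (z : C → ℝ) :
    pd c (fun z => f z + g z) z = pd c f z + pd c g z :=
  ((hf.hasDerivAt c z).add (hg.hasDerivAt c z)).deriv

lemma pd_mul {f g : (C → ℝ) → ℝ} (hf : FinOrd f) (hg : FinOrd g) (c : C) (z : C → ℝ) :
    pd c (fun z => f z * g z) z = pd c f z * g z + f z * pd c g z := by
  have := ((hf.hasDerivAt c z).mul (hg.hasDerivAt c z)).deriv
  simp only [Function.update_eq_self] at this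
  exact this

lemma pd_neg {f : (C → ℝ) → ℝ} (hf : FinOrd f) (c : C) (z : C → ℝ) :
    pd c (fun z => -f z) z = -pd c f z :=
  (hf.hasDerivAt c z).neg.deriv

end Generic

section WithM2
/-! ### The coefficient functions of `Dcpe` -/

section WithM
variable {m : ℕ} [NeZero m]

noncomputable def coeff (μ : Fin m) : CP m → BCPE m → ℝ
  | .x ν => fun _ => if ν = μ then 1 else 0
  | .u1 i => u1fun (i.1 + Pi.single μ 1)
  | .uN α i => fun z => z (.uN α (i + Pi.single μ 1))
  | .p i => pAllFun (i.1 + Pi.single μ 1)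

def kind : CP m → Fin 4
  | .x _ => 0
  | .u1 _ => 1
  | .uN _ _ => 2
  | .p _ => 3

def isUNb (α : {α : Fin m // α ≠ 0}) : CP m → Bool
  | .uN β _ => decide (β = α)
  | _ => false

/-- The master lemma: on a finite-order function with representation support `s`
containing `x μ`, the total derivative is a finite sum. -/
theorem Dcpe_rep {f : BCPE m → ℝ} {s : Finset (CP m)} (hf : IsRep s f) (μ : Fin m)
    (hx : CP.x μ ∈ s) (z : BCPE m) :
    Dcpe μ f z = ∑ c ∈ s, coeff μ c z * pd c f z := by
  classical
  set G : CP m → ℝ := fun c => coeff μ c z * pd c f z with hG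
  have hsplit : ∑ c ∈ s, G c
      = ∑ k : Fin 4, ∑ c ∈ s.filter (fun c => kind c = k), G c :=
    (Finset.sum_fiberwise s kind G).symm
  have hP0 : ∑ c ∈ s.filter (fun c => kind c = 0), G c = pd (CP.x μ) f z := by
    have haux : ∀ c ∈ s.filter (fun c => kind c = 0), c ≠ CP.x μ → G c = 0 := by
      intro c hc hne
      obtain ⟨hcs, hk⟩ := Finset.mem_filter.mp hc
      cases c with
      | x ν =>
        have hνμ : ν ≠ μ := fun h => hne (by rw [h])
        simp [hG, coeff, hνμ]
      | u1 _ => simp [kind] at hk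
      | uN _ _ => simp [kind] at hk
      | p _ => simp [kind] at hk
    have hmemx : CP.x μ ∈ s.filter (fun c => kind c = 0) := Finset.mem_filter.mpr ⟨hx, rfl⟩
    rw [Finset.sum_eq_single_of_mem (CP.x μ) hmemx haux]
    simp [hG, coeff]
  have hP1 : ∑ᶠ i : {i : MIdx m // i 0 = 0},
        u1fun (i.1 + Pi.single μ 1) z * pd (CP.u1 i) f z
      = ∑ c ∈ s.filter (fun c => kind c = 1), G c := by
    have hinj : Set.InjOn (CP.u1 (m := m))
        (CP.u1 ⁻¹' ↑(s.filter (fun c => kind c = 1))) := by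
      intro a _ b _ h; cases h; rfl
    rw [← Finset.sum_preimage (CP.u1 (m := m)) (s.filter (fun c => kind c = 1)) hinj G ?hz]
    case hz =>
      intro c hc hr
      obtain ⟨hcs, hk⟩ := Finset.mem_filter.mp hc
      cases c with
      | u1 i => exact absurd ⟨i, rfl⟩ hr
      | x _ => simp [kind] at hk
      | uN _ _ => simp [kind] at hk
      | p _ => simp [kind] at hk
    have hGr : ∀ i : {i : MIdx m // i 0 = 0},
        G (CP.u1 i) = u1fun (i.1 + Pi.single μ 1) z * pd (CP.u1 i) f z := fun _ => rfl
    simp only [hGr]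
    apply finsum_eq_finset_sum_of_support_subset
    intro i hi
    have hpd : pd (CP.u1 i) f z ≠ 0 := by
      intro h0; apply hi; simp only [Function.mem_support, hG] at *; simp [h0]
    have hmem : CP.u1 i ∈ s := by
      by_contra hns; exact hpd (hf.pd_eq_zero hns z)
    simp only [Finset.coe_preimage, Set.mem_preimage, Finset.mem_coe]
    exact Finset.mem_filter.mpr ⟨hmem, rfl⟩
  have hP3 : ∑ᶠ i : {i : MIdx m // i 0 ≤ 1},
        pAllFun (i.1 + Pi.single μ 1) z * pd (CP.p i) f z
      = ∑ c ∈ s.filter (fun c => kind c = 3), G c := by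
    have hinj : Set.InjOn (CP.p (m := m))
        (CP.p ⁻¹' ↑(s.filter (fun c => kind c = 3))) := by
      intro a _ b _ h; cases h; rfl
    rw [← Finset.sum_preimage (CP.p (m := m)) (s.filter (fun c => kind c = 3)) hinj G ?hz]
    case hz =>
      intro c hc hr
      obtain ⟨hcs, hk⟩ := Finset.mem_filter.mp hc
      cases c with
      | p i => exact absurd ⟨i, rfl⟩ hr
      | x _ => simp [kind] at hk
      | uN _ _ => simp [kind] at hk
      | u1 _ => simp [kind] at hk
    have hGr : ∀ i : {i : MIdx m // i 0 ≤ 1},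
        G (CP.p i) = pAllFun (i.1 + Pi.single μ 1) z * pd (CP.p i) f z := fun _ => rfl
    simp only [hGr]
    apply finsum_eq_finset_sum_of_support_subset
    intro i hi
    have hpd : pd (CP.p i) f z ≠ 0 := by
      intro h0; apply hi; simp only [Function.mem_support, hG] at *; simp [h0]
    have hmem : CP.p i ∈ s := by
      by_contra hns; exact hpd (hf.pd_eq_zero hns z)
    simp only [Finset.coe_preimage, Set.mem_preimage, Finset.mem_coe]
    exact Finset.mem_filter.mpr ⟨hmem, rfl⟩
  have hP2 : ∑ᶠ (α : {α : Fin m // α ≠ 0}) (i : MIdx m),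
        z (CP.uN α (i + Pi.single μ 1)) * pd (CP.uN α i) f z
      = ∑ c ∈ s.filter (fun c => kind c = 2), G c := by
    rw [finsum_eq_sum_of_fintype]
    have hinner : ∀ α : {α : Fin m // α ≠ 0},
        ∑ᶠ i : MIdx m, z (CP.uN α (i + Pi.single μ 1)) * pd (CP.uN α i) f z
          = ∑ c ∈ s.filter (fun c => isUNb α c), G c := by
      intro α
      have hinj : Set.InjOn (CP.uN α)
          (CP.uN α ⁻¹' ↑(s.filter (fun c => isUNb α c))) := by
        intro a _ b _ h; cases h; rfl
      rw [← Finset.sum_preimage (CP.uN α) (s.filter (fun c => isUNb α c)) hinj G ?hz]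
      case hz =>
        intro c hc hr
        obtain ⟨hcs, hk⟩ := Finset.mem_filter.mp hc
        cases c with
        | uN β i =>
          have : β = α := by simpa [isUNb] using hk
          subst this
          exact absurd ⟨i, rfl⟩ hr
        | x _ => simp [isUNb] at hk
        | u1 _ => simp [isUNb] at hk
        | p _ => simp [isUNb] at hk
      have hGr : ∀ i : MIdx m,
          G (CP.uN α i) = z (CP.uN α (i + Pi.single μ 1)) * pd (CP.uN α i) f z :=
        fun _ => rfl
      simp only [hGr]
      apply finsum_eq_finset_sum_of_support_subset
      intro i hi
      have hpd : pd (CP.uN α i) f z ≠ 0 := by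
        intro h0; apply hi; simp only [Function.mem_support] at *; simp [h0]
      have hmem : CP.uN α i ∈ s := by
        by_contra hns; exact hpd (hf.pd_eq_zero hns z)
      simp only [Finset.coe_preimage, Set.mem_preimage, Finset.mem_coe]
      exact Finset.mem_filter.mpr ⟨hmem, by simp [isUNb]⟩
    rw [Finset.sum_congr rfl fun α _ => hinner α]
    rw [← Finset.sum_biUnion]
    · congr 1
      ext c
      simp only [Finset.mem_biUnion, Finset.mem_univ, true_and, Finset.mem_filter]
      cases c with
      | uN β i =>
        constructor
        · rintro ⟨α, hs, _⟩; exact ⟨hs, rfl⟩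
        · rintro ⟨hs, _⟩; exact ⟨β, hs, by simp [isUNb]⟩
      | x _ => simp [isUNb, kind]
      | u1 _ => simp [isUNb, kind]
      | p _ => simp [isUNb, kind]
    · intro α _ β _ hne
      simp only [Function.onFun]
      refine Finset.disjoint_left.mpr fun c hc hc' => ?_
      obtain ⟨_, h1⟩ := Finset.mem_filter.mp hc
      obtain ⟨_, h2⟩ := Finset.mem_filter.mp hc'
      cases c with
      | uN γ i =>
        have e1 : γ = α := by simpa [isUNb] using h1
        have e2 : γ = β := by simpa [isUNb] using h2
        exact hne (e1 ▸ e2)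
      | x _ => simp [isUNb] at h1
      | u1 _ => simp [isUNb] at h1
      | p _ => simp [isUNb] at h1
  rw [Dcpe, hsplit, Fin.sum_univ_four, hP0, hP1, hP2, hP3]

/-! ### `FinOrd` closure properties -/

section FinOrdClosure
variable {C : Type*} [DecidableEq C]

lemma finOrd_const (a : ℝ) : FinOrd (fun _ : C → ℝ => a) :=
  isRep_finOrd (IsRep.const ∅ a)

lemma finOrd_coord (c : C) : FinOrd (fun z : C → ℝ => z c) :=
  isRep_finOrd (isRep_coord (Finset.mem_singleton_self c))

lemma FinOrd.add {f g : (C → ℝ) → ℝ} (hf : FinOrd f) (hg : FinOrd g) :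
    FinOrd (fun z => f z + g z) := by
  obtain ⟨s₁, h₁⟩ := finOrd_isRep hf
  obtain ⟨s₂, h₂⟩ := finOrd_isRep hg
  exact isRep_finOrd ((h₁.mono Finset.subset_union_left).add
    (h₂.mono Finset.subset_union_right))

lemma FinOrd.mul {f g : (C → ℝ) → ℝ} (hf : FinOrd f) (hg : FinOrd g) :
    FinOrd (fun z => f z * g z) := by
  obtain ⟨s₁, h₁⟩ := finOrd_isRep hf
  obtain ⟨s₂, h₂⟩ := finOrd_isRep hg
  exact isRep_finOrd ((h₁.mono Finset.subset_union_left).mul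
    (h₂.mono Finset.subset_union_right))

lemma FinOrd.sub {f g : (C → ℝ) → ℝ} (hf : FinOrd f) (hg : FinOrd g) :
    FinOrd (fun z => f z - g z) := by
  obtain ⟨s₁, h₁⟩ := finOrd_isRep hf
  obtain ⟨s₂, h₂⟩ := finOrd_isRep hg
  exact isRep_finOrd ((h₁.mono Finset.subset_union_left).sub
    (h₂.mono Finset.subset_union_right))

lemma FinOrd.neg {f : (C → ℝ) → ℝ} (hf : FinOrd f) : FinOrd (fun z => -f z) := by
  obtain ⟨s₁, h₁⟩ := finOrd_isRep hf
  exact isRep_finOrd h₁.neg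

lemma FinOrd.const_mul {f : (C → ℝ) → ℝ} (hf : FinOrd f) (a : ℝ) :
    FinOrd (fun z => a * f z) :=
  (finOrd_const a).mul hf

lemma FinOrd.finsetSum {ι : Type*} {t : Finset ι} {F : ι → (C → ℝ) → ℝ}
    (hF : ∀ a ∈ t, FinOrd (F a)) : FinOrd (fun z => ∑ a ∈ t, F a z) := by
  classical
  induction t using Finset.induction with
  | empty => simpa using finOrd_const (0 : ℝ)
  | insert a t hnot ih =>
    have := (hF a (Finset.mem_insert_self a t)).add
      (ih fun b hb => hF b (Finset.mem_insert_of_mem hb))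
    simpa [Finset.sum_insert hnot] using this

lemma FinOrd.fintypeSum {ι : Type*} [Fintype ι] {F : ι → (C → ℝ) → ℝ}
    (hF : ∀ a, FinOrd (F a)) : FinOrd (fun z => ∑ a, F a z) :=
  FinOrd.finsetSum fun a _ => hF a

end FinOrdClosure

variable {m : ℕ} [NeZero m]

lemma finOrd_u1fun (i : MIdx m) : FinOrd (u1fun i) := by
  rw [u1fun]
  split_ifs with h
  · exact finOrd_coord _
  · exact (FinOrd.fintypeSum fun α => finOrd_coord _).neg

lemma finOrd_uAll (μ : Fin m) (i : MIdx m) : FinOrd (uAll μ i) := by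
  rw [uAll]
  split_ifs with h
  · exact finOrd_u1fun i
  · exact finOrd_coord _

lemma finOrd_pAux (n : ℕ) (i : MIdx m) : FinOrd (pAux n i) := by
  induction n generalizing i with
  | zero =>
    rw [pAux]
    split_ifs with h
    · exact finOrd_coord _
    · exact finOrd_const 0
  | succ n ih =>
    rw [pAux]
    split_ifs with h
    · exact finOrd_coord _
    · refine FinOrd.sub ((FinOrd.fintypeSum fun α => ih _).neg) ?_
      refine FinOrd.finsetSum fun k _ => ?_
      refine FinOrd.const_mul ?_ _
      exact FinOrd.fintypeSum fun lam => FinOrd.fintypeSum fun ν =>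
        (finOrd_uAll _ _).mul (finOrd_uAll _ _)

lemma finOrd_pAllFun (i : MIdx m) : FinOrd (pAllFun i) := finOrd_pAux _ _

lemma finOrd_coeff (μ : Fin m) (c : CP m) : FinOrd (coeff μ c) := by
  cases c with
  | x ν => exact finOrd_const _
  | u1 i => exact finOrd_u1fun _
  | uN α i => exact finOrd_coord _
  | p i => exact finOrd_pAllFun _

/-! ### Calculus of `Dcpe` on finite-order functions -/

lemma Dcpe_coord (μ : Fin m) (c : CP m) (z : BCPE m) :
    Dcpe μ (fun z => z c) z = coeff μ c z := by
  classical
  have hrep : IsRep (insert (CP.x μ) {c}) (fun z : BCPE m => z c) :=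
    isRep_coord (by simp)
  rw [Dcpe_rep hrep μ (Finset.mem_insert_self _ _) z]
  have haux : ∀ c' ∈ insert (CP.x μ) ({c} : Finset (CP m)), c' ≠ c →
      coeff μ c' z * pd c' (fun z : BCPE m => z c) z = 0 := by
    intro c' _ hne
    rw [pd_coord]
    simp [Ne.symm hne]
  rw [Finset.sum_eq_single_of_mem c (by simp) haux, pd_coord]
  simp

lemma Dcpe_const (μ : Fin m) (a : ℝ) (z : BCPE m) :
    Dcpe μ (fun _ => a) z = 0 := by
  classical
  have hrep : IsRep {CP.x μ} (fun _ : BCPE m => a) := IsRep.const _ a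
  rw [Dcpe_rep hrep μ (Finset.mem_singleton_self _) z, Finset.sum_singleton, pd_const,
    mul_zero]

lemma Dcpe_add {f g : BCPE m → ℝ} (hf : FinOrd f) (hg : FinOrd g) (μ : Fin m) (z : BCPE m) :
    Dcpe μ (fun z => f z + g z) z = Dcpe μ f z + Dcpe μ g z := by
  classical
  obtain ⟨s₁, hxs₁, h₁⟩ := hf.exists_isRep {CP.x μ}
  obtain ⟨s₂, hxs₂, h₂⟩ := hg.exists_isRep {CP.x μ}
  have h₁' : IsRep (s₁ ∪ s₂) f := h₁.mono Finset.subset_union_left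
  have h₂' : IsRep (s₁ ∪ s₂) g := h₂.mono Finset.subset_union_right
  have hx : CP.x μ ∈ s₁ ∪ s₂ :=
    Finset.mem_union_left _ (hxs₁ (Finset.mem_singleton_self _))
  rw [Dcpe_rep (h₁'.add h₂') μ hx z, Dcpe_rep h₁' μ hx z, Dcpe_rep h₂' μ hx z,
    ← Finset.sum_add_distrib]
  refine Finset.sum_congr rfl fun c _ => ?_
  rw [pd_add hf hg, mul_add]

lemma Dcpe_neg {f : BCPE m → ℝ} (hf : FinOrd f) (μ : Fin m) (z : BCPE m) :
    Dcpe μ (fun z => -f z) z = -Dcpe μ f z := by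
  classical
  obtain ⟨s₁, hxs₁, h₁⟩ := hf.exists_isRep {CP.x μ}
  have hx : CP.x μ ∈ s₁ := hxs₁ (Finset.mem_singleton_self _)
  rw [Dcpe_rep h₁.neg μ hx z, Dcpe_rep h₁ μ hx z, ← Finset.sum_neg_distrib]
  refine Finset.sum_congr rfl fun c _ => ?_
  rw [pd_neg hf, mul_neg]

lemma Dcpe_sub {f g : BCPE m → ℝ} (hf : FinOrd f) (hg : FinOrd g) (μ : Fin m) (z : BCPE m) :
    Dcpe μ (fun z => f z - g z) z = Dcpe μ f z - Dcpe μ g z := by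
  have h1 : (fun z => f z - g z) = fun z => f z + -g z := by funext w; ring
  rw [h1, Dcpe_add hf hg.neg, Dcpe_neg hg]
  ring

lemma Dcpe_mul {f g : BCPE m → ℝ} (hf : FinOrd f) (hg : FinOrd g) (μ : Fin m) (z : BCPE m) :
    Dcpe μ (fun z => f z * g z) z = Dcpe μ f z * g z + f z * Dcpe μ g z := by
  classical
  obtain ⟨s₁, hxs₁, h₁⟩ := hf.exists_isRep {CP.x μ}
  obtain ⟨s₂, hxs₂, h₂⟩ := hg.exists_isRep {CP.x μ}
  have h₁' : IsRep (s₁ ∪ s₂) f := h₁.mono Finset.subset_union_left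
  have h₂' : IsRep (s₁ ∪ s₂) g := h₂.mono Finset.subset_union_right
  have hx : CP.x μ ∈ s₁ ∪ s₂ :=
    Finset.mem_union_left _ (hxs₁ (Finset.mem_singleton_self _))
  rw [Dcpe_rep (h₁'.mul h₂') μ hx z, Dcpe_rep h₁' μ hx z, Dcpe_rep h₂' μ hx z,
    Finset.sum_mul, Finset.mul_sum, ← Finset.sum_add_distrib]
  refine Finset.sum_congr rfl fun c _ => ?_
  rw [pd_mul hf hg]
  ring

lemma Dcpe_const_mul {f : BCPE m → ℝ} (hf : FinOrd f) (a : ℝ) (μ : Fin m) (z : BCPE m) :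
    Dcpe μ (fun z => a * f z) z = a * Dcpe μ f z := by
  rw [Dcpe_mul (finOrd_const a) hf, Dcpe_const]
  ring

lemma Dcpe_finsetSum {ι : Type*} {t : Finset ι} {F : ι → BCPE m → ℝ}
    (hF : ∀ a ∈ t, FinOrd (F a)) (μ : Fin m) (z : BCPE m) :
    Dcpe μ (fun z => ∑ a ∈ t, F a z) z = ∑ a ∈ t, Dcpe μ (F a) z := by
  classical
  induction t using Finset.induction with
  | empty => simpa using Dcpe_const μ 0 z
  | insert a t hnot ih =>
    have h1 : FinOrd (F a) := hF a (Finset.mem_insert_self a t)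
    have h2 : ∀ b ∈ t, FinOrd (F b) := fun b hb => hF b (Finset.mem_insert_of_mem hb)
    have key : Dcpe μ (fun z => F a z + ∑ b ∈ t, F b z) z
        = Dcpe μ (F a) z + ∑ b ∈ t, Dcpe μ (F b) z := by
      rw [Dcpe_add h1 (FinOrd.finsetSum h2), ih h2]
    simp only [Finset.sum_insert hnot]
    exact key
lemma Dcpe_fintypeSum {ι : Type*} [Fintype ι] {F : ι → BCPE m → ℝ}
    (hF : ∀ a, FinOrd (F a)) (μ : Fin m) (z : BCPE m) :
    Dcpe μ (fun z => ∑ a, F a z) z = ∑ a, Dcpe μ (F a) z :=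
  Dcpe_finsetSum (fun a _ => hF a) μ z

lemma FinOrd.dcpe {f : BCPE m → ℝ} (hf : FinOrd f) (μ : Fin m) : FinOrd (Dcpe μ f) := by
  classical
  obtain ⟨s, hxs, hrep⟩ := hf.exists_isRep {CP.x μ}
  have hx : CP.x μ ∈ s := hxs (Finset.mem_singleton_self _)
  have heq : Dcpe μ f = fun z => ∑ c ∈ s, coeff μ c z * pd c f z := by
    funext z; exact Dcpe_rep hrep μ hx z
  rw [heq]
  exact FinOrd.finsetSum fun c _ =>
    (finOrd_coeff μ c).mul (isRep_finOrd (isRep_pd hrep c))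

/-! ### Multi-index helpers -/

lemma midx_single_at0 {α : Fin m} (hα : α ≠ 0) (d : ℕ) : (Pi.single α d : MIdx m) 0 = 0 := by
  simp [Pi.single_apply, Ne.symm hα]

lemma midx_update_single_at0 (i : MIdx m) (v : ℕ) {α : Fin m} (hα : α ≠ 0) (d : ℕ) :
    ((Function.update i 0 v + Pi.single α d : MIdx m)) 0 = v := by
  simp [midx_single_at0 hα]

lemma midx_update_add (i : MIdx m) (μ : Fin m) {d : ℕ} (h : d ≤ i 0) :
    Function.update (i + Pi.single μ 1 : MIdx m) 0 ((i + Pi.single μ 1 : MIdx m) 0 - d)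
      = Function.update i 0 (i 0 - d) + Pi.single μ 1 := by
  funext ν
  by_cases hν : ν = 0 <;> by_cases hμ : μ = 0 <;>
    simp [hν, hμ, Function.update_apply, Pi.single_apply] <;> omega

lemma midx_add_single_at0 (i : MIdx m) (μ : Fin m) :
    ((i + Pi.single μ 1 : MIdx m)) 0 = i 0 + (if μ = 0 then 1 else 0) := by
  rcases eq_or_ne μ 0 with h | h
  · subst h; simp
  · simp [h, midx_single_at0 h]

/-! ### `pAux` basics -/

lemma pAux_low {i : MIdx m} (h : i 0 ≤ 1) (n : ℕ) :
    pAux n i = fun z => z (CP.p ⟨i, h⟩) := by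
  cases n <;> rw [pAux] <;> rw [dif_pos h]

lemma pAux_congr : ∀ (n n' : ℕ) (i : MIdx m), i 0 ≤ 2 * n + 1 → i 0 ≤ 2 * n' + 1 →
    pAux n i = pAux n' i := by
  intro n
  induction n with
  | zero =>
    intro n' i h h'
    rw [pAux_low (by omega) 0, pAux_low (by omega) n']
  | succ n ih =>
    intro n' i h h'
    by_cases hi : i 0 ≤ 1
    · rw [pAux_low hi, pAux_low hi]
    · have h2 : 2 ≤ i 0 := by omega
      obtain ⟨n'', rfl⟩ : ∃ n'', n' = n'' + 1 := ⟨n' - 1, by omega⟩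
      rw [pAux, pAux, dif_neg hi, dif_neg hi]
      funext z
      have hrec : ∀ α : {α : Fin m // α ≠ 0},
          pAux n (Function.update i 0 (i 0 - 2) + Pi.single (α : Fin m) 2) z
            = pAux n'' (Function.update i 0 (i 0 - 2) + Pi.single (α : Fin m) 2) z := by
        intro α
        rw [ih n'' _ (by rw [midx_update_single_at0 i _ α.2]; omega)
          (by rw [midx_update_single_at0 i _ α.2]; omega)]
      rw [Finset.sum_congr rfl fun α _ => hrec α]

lemma pAllFun_eq_pAux {i : MIdx m} (n : ℕ) (h : i 0 ≤ 2 * n + 1) :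
    pAllFun i = pAux n i :=
  pAux_congr (i 0) n i (by omega) h

lemma pAllFun_low {i : MIdx m} (h : i 0 ≤ 1) :
    pAllFun i = fun z => z (CP.p ⟨i, h⟩) :=
  pAux_low h _

/-- The quadratic source term in the recursion for `p`. -/
noncomputable def Qfun (j : MIdx m) : BCPE m → ℝ := fun z =>
  ∑ k ∈ Finset.Iic j, (multiChoose j k : ℝ) *
    ∑ lam : Fin m, ∑ ν : Fin m,
      uAll lam (k + Pi.single ν 1) z * uAll ν ((j - k) + Pi.single lam 1) z

lemma finOrd_Qfun (j : MIdx m) : FinOrd (Qfun j) := by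
  refine FinOrd.finsetSum fun k _ => FinOrd.const_mul ?_ _
  exact FinOrd.fintypeSum fun lam => FinOrd.fintypeSum fun ν =>
    (finOrd_uAll _ _).mul (finOrd_uAll _ _)

lemma pAllFun_rec {i : MIdx m} (h : 2 ≤ i 0) :
    pAllFun i = fun z =>
      -(∑ α : {α : Fin m // α ≠ 0},
          pAllFun (Function.update i 0 (i 0 - 2) + Pi.single (α : Fin m) 2) z)
        - Qfun (Function.update i 0 (i 0 - 2)) z := by
  obtain ⟨n, hn⟩ : ∃ n, i 0 = n + 1 := ⟨i 0 - 1, by omega⟩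
  have h1 : pAllFun i = pAux (n + 1) i := by rw [pAllFun, hn]
  rw [h1, pAux, dif_neg (by omega)]
  funext z
  have hrec : ∀ α : {α : Fin m // α ≠ 0},
      pAux n (Function.update i 0 (i 0 - 2) + Pi.single (α : Fin m) 2) z
        = pAllFun (Function.update i 0 (i 0 - 2) + Pi.single (α : Fin m) 2) z := by
    intro α
    rw [pAllFun_eq_pAux n (by rw [midx_update_single_at0 i _ α.2]; omega)]
  rw [Finset.sum_congr rfl fun α _ => hrec α]
  rfl

/-! ### Prolongation of the substituted coordinate functions -/

lemma Dcpe_u1fun (μ : Fin m) (i : MIdx m) (z : BCPE m) :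
    Dcpe μ (u1fun i) z = u1fun (i + Pi.single μ 1) z := by
  by_cases h : i 0 = 0
  · have h1 : u1fun i = fun z => z (CP.u1 ⟨i, h⟩) := by rw [u1fun, dif_pos h]
    rw [h1, Dcpe_coord]
    rfl
  · have h1 : u1fun i = fun z => -∑ α : {α : Fin m // α ≠ 0},
        z (CP.uN α (Function.update i 0 (i 0 - 1) + Pi.single (α : Fin m) 1)) := by
      rw [u1fun, dif_neg h]
    have h2 : ((i + Pi.single μ 1 : MIdx m)) 0 ≠ 0 := by
      rw [midx_add_single_at0]; omega
    have h3 : u1fun (i + Pi.single μ 1) = fun z =>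
        -∑ α : {α : Fin m // α ≠ 0},
          z (CP.uN α (Function.update (i + Pi.single μ 1 : MIdx m) 0
              (((i + Pi.single μ 1 : MIdx m)) 0 - 1)
            + Pi.single (α : Fin m) 1)) := by
      rw [u1fun, dif_neg h2]
    rw [h1, h3,
      Dcpe_neg (FinOrd.fintypeSum fun α => finOrd_coord _) μ z,
      Dcpe_fintypeSum (fun α => finOrd_coord _) μ z]
    congr 1
    refine Finset.sum_congr rfl fun α _ => ?_
    rw [Dcpe_coord]
    show z (CP.uN α (Function.update i 0 (i 0 - 1) + Pi.single (α : Fin m) 1 + Pi.single μ 1)) = _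
    rw [midx_update_add i μ (by omega)]
    congr 2
    funext ν
    simp [Pi.add_apply]
    ring
lemma Dcpe_uAll (μ ν : Fin m) (i : MIdx m) (z : BCPE m) :
    Dcpe μ (uAll ν i) z = uAll ν (i + Pi.single μ 1) z := by
  rw [uAll, uAll]
  split_ifs with h
  · exact Dcpe_u1fun μ i z
  · rw [Dcpe_coord]; rfl

/-! ### Pascal's rule for `multiChoose` -/

lemma multiChoose_zero_of_not_le {j k : MIdx m} (h : ¬k ≤ j) : multiChoose j k = 0 := by
  obtain ⟨ν, hν⟩ : ∃ ν, j ν < k ν := by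
    by_contra hc
    push_neg at hc
    exact h fun ν => hc ν
  exact Finset.prod_eq_zero (Finset.mem_univ ν) (Nat.choose_eq_zero_of_lt hν)

lemma multiChoose_succ_zero {j k : MIdx m} (μ : Fin m) (hk : k μ = 0) :
    multiChoose (j + Pi.single μ 1) k = multiChoose j k := by
  refine Finset.prod_congr rfl fun ν _ => ?_
  rcases eq_or_ne ν μ with h | h
  · subst h; simp [hk]
  · simp [Pi.single_eq_of_ne h]

lemma multiChoose_succ {j k : MIdx m} (μ : Fin m) (hk : k μ ≠ 0) :
    multiChoose (j + Pi.single μ 1) k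
      = multiChoose j k + multiChoose j (k - Pi.single μ 1) := by
  obtain ⟨t, ht⟩ : ∃ t, k μ = t + 1 := ⟨k μ - 1, by omega⟩
  have hsplit : ∀ i k' : MIdx m, multiChoose i k'
      = (i μ).choose (k' μ) * ∏ ν ∈ Finset.univ.erase μ, (i ν).choose (k' ν) := by
    intro i k'
    rw [multiChoose, ← Finset.prod_erase_mul _ _ (Finset.mem_univ μ)]
    ring
  rw [hsplit (j + Pi.single μ 1) k, hsplit j k, hsplit j (k - Pi.single μ 1)]
  have hoff : ∀ ν ∈ Finset.univ.erase μ, ((j + Pi.single μ 1 : MIdx m) ν).choose (k ν)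
      = (j ν).choose (k ν) := by
    intro ν hν
    have : ν ≠ μ := (Finset.mem_erase.mp hν).1
    simp [Pi.single_eq_of_ne this]
  have hoff2 : ∀ ν ∈ Finset.univ.erase μ, (j ν).choose ((k - Pi.single μ 1 : MIdx m) ν)
      = (j ν).choose (k ν) := by
    intro ν hν
    have : ν ≠ μ := (Finset.mem_erase.mp hν).1
    simp [Pi.single_eq_of_ne this]
  rw [Finset.prod_congr rfl hoff, Finset.prod_congr rfl hoff2]
  have h1 : ((j + Pi.single μ 1 : MIdx m)) μ = j μ + 1 := by simp
  have h2 : ((k - Pi.single μ 1 : MIdx m)) μ = t := by simp [ht]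
  rw [h1, h2, ht, Nat.choose_succ_succ]
  ring

/-! ### Prolongation of `Qfun` and `pAllFun` -/

lemma midx_le_add_single (j : MIdx m) (μ : Fin m) : j ≤ j + Pi.single μ 1 :=
  Pi.le_def.mpr fun ν => Nat.le_add_right _ _

lemma midx_sub_add_single {j k : MIdx m} (μ : Fin m) (h : k ≤ j) :
    j + Pi.single μ 1 - k = (j - k) + Pi.single μ 1 := by
  funext ν
  have := Pi.le_def.mp h ν
  by_cases hν : ν = μ
  · subst hν
    simp only [Pi.sub_apply, Pi.add_apply, Pi.single_eq_same]
    omega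
  · simp [Pi.single_eq_of_ne hν]

lemma midx_sub_sub_single {j k : MIdx m} (μ : Fin m) (hk : k μ ≠ 0) :
    j + Pi.single μ 1 - k = j - (k - Pi.single μ 1) := by
  funext ν
  by_cases hν : ν = μ
  · subst hν
    simp only [Pi.sub_apply, Pi.add_apply, Pi.single_eq_same]
    omega
  · simp [Pi.single_eq_of_ne hν]

lemma midx_sub_add_cancel {k : MIdx m} (μ : Fin m) (hk : k μ ≠ 0) :
    k - Pi.single μ 1 + Pi.single μ 1 = k := by
  funext ν
  by_cases hν : ν = μ
  · subst hν
    simp only [Pi.sub_apply, Pi.add_apply, Pi.single_eq_same]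
    omega
  · simp [Pi.single_eq_of_ne hν]

lemma midx_add_sub_cancel (k : MIdx m) (μ : Fin m) :
    k + Pi.single μ 1 - Pi.single μ 1 = k := by
  funext ν
  by_cases hν : ν = μ
  · subst hν
    simp only [Pi.sub_apply, Pi.add_apply, Pi.single_eq_same]
    omega
  · simp [Pi.single_eq_of_ne hν]

lemma Dcpe_Qfun (μ : Fin m) (j : MIdx m) (z : BCPE m) :
    Dcpe μ (Qfun j) z = Qfun (j + Pi.single μ 1) z := by
  classical
  -- abbreviations for the two Leibniz terms
  set A : MIdx m → ℝ := fun k => ∑ lam : Fin m, ∑ ν : Fin m,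
    uAll lam (k + Pi.single ν 1 + Pi.single μ 1) z *
      uAll ν ((j - k) + Pi.single lam 1) z with hA
  set B : MIdx m → ℝ := fun k => ∑ lam : Fin m, ∑ ν : Fin m,
    uAll lam (k + Pi.single ν 1) z *
      uAll ν ((j - k) + Pi.single lam 1 + Pi.single μ 1) z with hB
  -- Step 1: the left-hand side via the Leibniz rule
  have hLHS : Dcpe μ (Qfun j) z
      = ∑ k ∈ Finset.Iic j, (multiChoose j k : ℝ) * (A k + B k) := by
    have h0 : Dcpe μ (Qfun j) z = Dcpe μ (fun z => ∑ k ∈ Finset.Iic j,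
        (multiChoose j k : ℝ) * ∑ lam : Fin m, ∑ ν : Fin m,
          uAll lam (k + Pi.single ν 1) z *
            uAll ν ((j - k) + Pi.single lam 1) z) z := rfl
    rw [h0, Dcpe_finsetSum (fun k _ => FinOrd.const_mul
      (FinOrd.fintypeSum fun lam => FinOrd.fintypeSum fun ν =>
        (finOrd_uAll _ _).mul (finOrd_uAll _ _)) _) μ z]
    refine Finset.sum_congr rfl fun k _ => ?_
    rw [Dcpe_const_mul (FinOrd.fintypeSum fun lam => FinOrd.fintypeSum fun ν =>
      (finOrd_uAll _ _).mul (finOrd_uAll _ _)) _ μ z]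
    congr 1
    rw [Dcpe_fintypeSum (fun lam => FinOrd.fintypeSum fun ν =>
      (finOrd_uAll _ _).mul (finOrd_uAll _ _)) μ z]
    rw [hA, hB, ← Finset.sum_add_distrib]
    refine Finset.sum_congr rfl fun lam _ => ?_
    rw [Dcpe_fintypeSum (fun ν => (finOrd_uAll _ _).mul (finOrd_uAll _ _)) μ z,
      ← Finset.sum_add_distrib]
    refine Finset.sum_congr rfl fun ν _ => ?_
    rw [Dcpe_mul (finOrd_uAll _ _) (finOrd_uAll _ _) μ z, Dcpe_uAll, Dcpe_uAll]
  rw [hLHS]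
  -- Step 2: split the right-hand side using Pascal's rule
  have hT : Qfun (j + Pi.single μ 1) z = ∑ k ∈ Finset.Iic (j + Pi.single μ 1),
      ((multiChoose j k : ℝ) * ∑ lam : Fin m, ∑ ν : Fin m,
          uAll lam (k + Pi.single ν 1) z *
            uAll ν ((j + Pi.single μ 1 - k) + Pi.single lam 1) z
        + (if k μ = 0 then (0 : ℝ) else (multiChoose j (k - Pi.single μ 1) : ℝ) *
            ∑ lam : Fin m, ∑ ν : Fin m,
              uAll lam (k + Pi.single ν 1) z *
                uAll ν ((j + Pi.single μ 1 - k) + Pi.single lam 1) z)) := by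
    rw [Qfun]
    refine Finset.sum_congr rfl fun k _ => ?_
    by_cases hk : k μ = 0
    · rw [if_pos hk, multiChoose_succ_zero μ hk, add_zero]
    · rw [if_neg hk, multiChoose_succ μ hk]
      push_cast
      ring
  rw [hT, Finset.sum_add_distrib]
  -- first piece
  have hS1 : ∑ k ∈ Finset.Iic (j + Pi.single μ 1),
      (multiChoose j k : ℝ) * ∑ lam : Fin m, ∑ ν : Fin m,
        uAll lam (k + Pi.single ν 1) z *
          uAll ν ((j + Pi.single μ 1 - k) + Pi.single lam 1) z
      = ∑ k ∈ Finset.Iic j, (multiChoose j k : ℝ) * B k := by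
    rw [← Finset.sum_subset (Finset.Iic_subset_Iic.mpr (midx_le_add_single j μ))
      (fun k _ hk => by
        rw [multiChoose_zero_of_not_le (fun hle => hk (Finset.mem_Iic.mpr hle))]
        simp)]
    refine Finset.sum_congr rfl fun k hk => ?_
    have hkj : k ≤ j := Finset.mem_Iic.mp hk
    congr 1
    rw [hB]
    refine Finset.sum_congr rfl fun lam _ => Finset.sum_congr rfl fun ν _ => ?_
    rw [midx_sub_add_single μ hkj, add_right_comm]
  -- second piece
  have hS2 : ∑ k ∈ Finset.Iic (j + Pi.single μ 1),
      (if k μ = 0 then (0 : ℝ) else (multiChoose j (k - Pi.single μ 1) : ℝ) *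
        ∑ lam : Fin m, ∑ ν : Fin m,
          uAll lam (k + Pi.single ν 1) z *
            uAll ν ((j + Pi.single μ 1 - k) + Pi.single lam 1) z)
      = ∑ k ∈ Finset.Iic j, (multiChoose j k : ℝ) * A k := by
    have hfilter : ∑ k ∈ Finset.Iic (j + Pi.single μ 1),
        (if k μ = 0 then (0 : ℝ) else (multiChoose j (k - Pi.single μ 1) : ℝ) *
          ∑ lam : Fin m, ∑ ν : Fin m,
            uAll lam (k + Pi.single ν 1) z *
              uAll ν ((j + Pi.single μ 1 - k) + Pi.single lam 1) z)
        = ∑ k ∈ (Finset.Iic (j + Pi.single μ 1)).filter (fun k => ¬k μ = 0),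
            (multiChoose j (k - Pi.single μ 1) : ℝ) *
              ∑ lam : Fin m, ∑ ν : Fin m,
                uAll lam (k + Pi.single ν 1) z *
                  uAll ν ((j + Pi.single μ 1 - k) + Pi.single lam 1) z := by
      rw [Finset.sum_filter]
      exact Finset.sum_congr rfl fun k _ => (ite_not _ _ _).symm
    rw [hfilter]
    refine Finset.sum_nbij' (fun k => k - Pi.single μ 1) (fun k => k + Pi.single μ 1)
      ?_ ?_ ?_ ?_ ?_
    · intro k hk
      obtain ⟨hk1, hk2⟩ := Finset.mem_filter.mp hk
      have hle := Pi.le_def.mp (Finset.mem_Iic.mp hk1)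
      refine Finset.mem_Iic.mpr (Pi.le_def.mpr fun ν => ?_)
      have := hle ν
      by_cases hν : ν = μ
      · subst hν
        simp only [Pi.sub_apply, Pi.add_apply, Pi.single_eq_same] at this ⊢
        omega
      · simp only [Pi.sub_apply, Pi.add_apply, Pi.single_eq_of_ne hν] at this ⊢
        omega
    · intro k hk
      have hle := Pi.le_def.mp (Finset.mem_Iic.mp hk)
      refine Finset.mem_filter.mpr ⟨Finset.mem_Iic.mpr (Pi.le_def.mpr fun ν => ?_), ?_⟩
      · have := hle ν
        by_cases hν : ν = μ
        · subst hν; simp only [Pi.add_apply, Pi.single_eq_same]; omega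
        · simp only [Pi.add_apply, Pi.single_eq_of_ne hν]; omega
      · simp only [Pi.add_apply, Pi.single_eq_same]; omega
    · intro k hk
      exact midx_sub_add_cancel μ (Finset.mem_filter.mp hk).2
    · intro k _
      exact midx_add_sub_cancel k μ
    · intro k hk
      have hkμ : k μ ≠ 0 := (Finset.mem_filter.mp hk).2
      congr 1
      rw [hA]
      refine Finset.sum_congr rfl fun lam _ => Finset.sum_congr rfl fun ν _ => ?_
      rw [add_right_comm (k - Pi.single μ 1) (Pi.single ν 1) (Pi.single μ 1),
        midx_sub_add_cancel μ hkμ, midx_sub_sub_single μ hkμ]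
  rw [hS1, hS2]
  rw [← Finset.sum_add_distrib]
  refine Finset.sum_congr rfl fun k _ => ?_
  ring

lemma Dcpe_pAllFun_aux : ∀ (n : ℕ) (i : MIdx m), i 0 ≤ n → ∀ (μ : Fin m) (z : BCPE m),
    Dcpe μ (pAllFun i) z = pAllFun (i + Pi.single μ 1) z := by
  intro n
  induction n using Nat.strong_induction_on with
  | _ n ih =>
    intro i hin μ z
    by_cases h : i 0 ≤ 1
    · rw [pAllFun_low h, Dcpe_coord]
      rfl
    · have h2 : 2 ≤ i 0 := by omega
      have hrecL := pAllFun_rec h2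
      have hFsum : FinOrd (fun z : BCPE m => ∑ α : {α : Fin m // α ≠ 0},
          pAllFun (Function.update i 0 (i 0 - 2) + Pi.single (α : Fin m) 2) z) :=
        FinOrd.fintypeSum fun α => finOrd_pAllFun _
      rw [hrecL, Dcpe_sub hFsum.neg (finOrd_Qfun _) μ z, Dcpe_neg hFsum μ z,
        Dcpe_fintypeSum (fun α => finOrd_pAllFun _) μ z, Dcpe_Qfun μ _ z]
      have hIH : ∀ α : {α : Fin m // α ≠ 0},
          Dcpe μ (pAllFun (Function.update i 0 (i 0 - 2) + Pi.single (α : Fin m) 2)) z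
            = pAllFun (Function.update i 0 (i 0 - 2) + Pi.single (α : Fin m) 2
                + Pi.single μ 1) z := by
        intro α
        exact ih (i 0 - 2) (by omega) _ (le_of_eq (midx_update_single_at0 i _ α.2 2)) μ z
      rw [Finset.sum_congr rfl fun α _ => hIH α]
      -- right-hand side
      have h2' : 2 ≤ ((i + Pi.single μ 1 : MIdx m)) 0 := by
        rw [midx_add_single_at0]; omega
      rw [pAllFun_rec h2', midx_update_add i μ (by omega)]
      congr 2
      refine Finset.sum_congr rfl fun α _ => ?_
      rw [add_right_comm]

lemma Dcpe_pAllFun (μ : Fin m) (i : MIdx m) (z : BCPE m) :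
    Dcpe μ (pAllFun i) z = pAllFun (i + Pi.single μ 1) z :=
  Dcpe_pAllFun_aux (i 0) i le_rfl μ z

/-! ### Commutativity of total derivatives on finite-order functions -/

lemma Dcpe_coeff_symm (μ ν : Fin m) (c : CP m) (z : BCPE m) :
    Dcpe μ (coeff ν c) z = Dcpe ν (coeff μ c) z := by
  cases c with
  | x lam =>
    show Dcpe μ (fun _ => if lam = ν then (1:ℝ) else 0) z
      = Dcpe ν (fun _ => if lam = μ then (1:ℝ) else 0) z
    rw [Dcpe_const, Dcpe_const]
  | u1 i =>
    show Dcpe μ (u1fun (i.1 + Pi.single ν 1)) z = Dcpe ν (u1fun (i.1 + Pi.single μ 1)) z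
    rw [Dcpe_u1fun, Dcpe_u1fun, add_right_comm]
  | uN α i =>
    show Dcpe μ (fun z => z (CP.uN α (i + Pi.single ν 1))) z
      = Dcpe ν (fun z => z (CP.uN α (i + Pi.single μ 1))) z
    rw [Dcpe_coord, Dcpe_coord]
    show z (CP.uN α (i + Pi.single ν 1 + Pi.single μ 1))
      = z (CP.uN α (i + Pi.single μ 1 + Pi.single ν 1))
    rw [add_right_comm]
  | p i =>
    show Dcpe μ (pAllFun (i.1 + Pi.single ν 1)) z = Dcpe ν (pAllFun (i.1 + Pi.single μ 1)) z
    rw [Dcpe_pAllFun, Dcpe_pAllFun, add_right_comm]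

lemma Dcpe_comm {f : BCPE m → ℝ} (hf : FinOrd f) (μ ν : Fin m) (z : BCPE m) :
    Dcpe μ (Dcpe ν f) z = Dcpe ν (Dcpe μ f) z := by
  classical
  obtain ⟨s, hxs, hrep⟩ := hf.exists_isRep {CP.x μ, CP.x ν}
  have hxμ : CP.x μ ∈ s := hxs (by simp)
  have hxν : CP.x ν ∈ s := hxs (by simp)
  have hkey : ∀ μ' ν', CP.x μ' ∈ s → CP.x ν' ∈ s →
      Dcpe μ' (Dcpe ν' f) z
        = (∑ c ∈ s, Dcpe μ' (coeff ν' c) z * pd c f z)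
          + ∑ c ∈ s, ∑ c' ∈ s, coeff ν' c z * (coeff μ' c' z * pd c' (pd c f) z) := by
    intro μ' ν' hμ' hν'
    have hDν : Dcpe ν' f = fun w => ∑ c ∈ s, coeff ν' c w * pd c f w := by
      funext w; exact Dcpe_rep hrep ν' hν' w
    rw [hDν, Dcpe_finsetSum (fun c _ => (finOrd_coeff ν' c).mul
      (isRep_finOrd (isRep_pd hrep c))) μ' z]
    have hterm : ∀ c ∈ s, Dcpe μ' (fun w => coeff ν' c w * pd c f w) z
        = Dcpe μ' (coeff ν' c) z * pd c f z
          + ∑ c' ∈ s, coeff ν' c z * (coeff μ' c' z * pd c' (pd c f) z) := by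
      intro c _
      rw [Dcpe_mul (finOrd_coeff ν' c) (isRep_finOrd (isRep_pd hrep c)) μ' z]
      congr 1
      rw [Dcpe_rep (isRep_pd hrep c) μ' hμ' z, Finset.mul_sum]
    rw [Finset.sum_congr rfl hterm, Finset.sum_add_distrib]
  rw [hkey μ ν hxμ hxν, hkey ν μ hxν hxμ]
  congr 1
  · exact Finset.sum_congr rfl fun c _ => by rw [Dcpe_coeff_symm]
  · rw [Finset.sum_comm]
    refine Finset.sum_congr rfl fun c _ => Finset.sum_congr rfl fun c' _ => ?_
    rw [hrep.pd_comm c' c]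
    ring

/-! ### Identities specific to the continuity constraint -/

lemma sum_split_fin (F : Fin m → ℝ) :
    ∑ μ : Fin m, F μ = F 0 + ∑ α : {α : Fin m // α ≠ 0}, F α := by
  rw [← Finset.add_sum_erase _ _ (Finset.mem_univ 0)]
  congr 1
  exact Finset.sum_subtype (Finset.univ.erase 0) (by simp) F

/-- `u¹_{j+e₁} = -Σ_β u^β_{j+e_β}` for `j ∈ I₀`. -/
lemma uAll_continuity {j : MIdx m} (hj : j 0 = 0) (z : BCPE m) :
    uAll 0 (j + Pi.single 0 1) z
      = -∑ β : {β : Fin m // β ≠ 0}, uAll (β : Fin m) (j + Pi.single (β : Fin m) 1) z := by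
  have h0 : ((j + Pi.single 0 1 : MIdx m)) 0 ≠ 0 := by
    rw [midx_add_single_at0]; simp
  have h1 : uAll (0 : Fin m) (j + Pi.single 0 1) = u1fun (j + Pi.single 0 1) := by
    rw [uAll, dif_pos rfl]
  rw [h1, u1fun, dif_neg h0]
  have h2 : Function.update (j + Pi.single 0 1 : MIdx m) 0
      (((j + Pi.single 0 1 : MIdx m)) 0 - 1) = j := by
    funext ν
    by_cases hν : ν = 0
    · subst hν; simp [Function.update_self, hj]
    · simp [Function.update_of_ne hν, Pi.single_eq_of_ne hν]
  rw [h2]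
  congr 1
  refine Finset.sum_congr rfl fun β _ => ?_
  rw [uAll, dif_neg β.2]

/-- `u¹_{e₁} = -S`. -/
lemma uAll_e1 (z : BCPE m) :
    uAll (0 : Fin m) (Pi.single 0 1) z
      = -∑ β : {β : Fin m // β ≠ 0}, uAll (β : Fin m) (Pi.single (β : Fin m) 1) z := by
  have := uAll_continuity (j := (0 : MIdx m)) rfl z
  simpa using this

/-- divergence identity: `Σ_μ u^μ_{e_α+e_μ} = 0`. -/
lemma uAll_div {α : Fin m} (hα : α ≠ 0) (z : BCPE m) :
    ∑ μ : Fin m, uAll μ (Pi.single α 1 + Pi.single μ 1) z = 0 := by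
  rw [sum_split_fin]
  rw [uAll_continuity (j := (Pi.single α 1 : MIdx m)) (midx_single_at0 hα 1) z]
  ring

/-- The key identity `(∗)`:
`D₁(u¹_{e_α} χ) + Σ_β D_β(u^β_{e_α} χ) = Σ_μ u^μ_{e_α} D_μ χ`. -/
lemma key_identity {χ : BCPE m → ℝ} (hχ : FinOrd χ) {α : Fin m} (hα : α ≠ 0) (z : BCPE m) :
    Dcpe 0 (fun w => uAll 0 (Pi.single α 1) w * χ w) z
      + ∑ β : {β : Fin m // β ≠ 0},
          Dcpe (β : Fin m) (fun w => uAll (β : Fin m) (Pi.single α 1) w * χ w) z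
      = ∑ μ : Fin m, uAll μ (Pi.single α 1) z * Dcpe μ χ z := by
  have hexp : ∀ μ : Fin m,
      Dcpe μ (fun w => uAll μ (Pi.single α 1) w * χ w) z
        = uAll μ (Pi.single α 1 + Pi.single μ 1) z * χ z
          + uAll μ (Pi.single α 1) z * Dcpe μ χ z := by
    intro μ
    rw [Dcpe_mul (finOrd_uAll _ _) hχ μ z, Dcpe_uAll]
  have hsum : ∑ β : {β : Fin m // β ≠ 0},
      Dcpe (β : Fin m) (fun w => uAll (β : Fin m) (Pi.single α 1) w * χ w) z
      = ∑ β : {β : Fin m // β ≠ 0},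
          (uAll (β : Fin m) (Pi.single α 1 + Pi.single (β : Fin m) 1) z * χ z
            + uAll (β : Fin m) (Pi.single α 1) z * Dcpe (β : Fin m) χ z) :=
    Finset.sum_congr rfl fun β _ => hexp (β : Fin m)
  rw [hexp 0, hsum, Finset.sum_add_distrib, ← Finset.sum_mul]
  have hdiv := uAll_div hα z
  rw [sum_split_fin] at hdiv
  rw [sum_split_fin]
  have hdiv2 : uAll 0 (Pi.single α 1 + Pi.single 0 1) z * χ z
      + (∑ β : {β : Fin m // β ≠ 0},
          uAll (β : Fin m) (Pi.single α 1 + Pi.single (β : Fin m) 1) z) * χ z = 0 := by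
    rw [← add_mul, hdiv, zero_mul]
  linarith [hdiv2]

lemma uAll_congr (μ : Fin m) {i i' : MIdx m} (h : i = i') (z : BCPE m) :
    uAll μ i z = uAll μ i' z := by rw [h]

/-- Expansion of `D_ν (u^λ_i ⋅ h)`. -/
lemma Dcpe_uAll_mul {h : BCPE m → ℝ} (hh : FinOrd h) (ν lam : Fin m) (i : MIdx m)
    (z : BCPE m) :
    Dcpe ν (fun w => uAll lam i w * h w) z
      = uAll lam (i + Pi.single ν 1) z * h z + uAll lam i z * Dcpe ν h z := by
  rw [Dcpe_mul (finOrd_uAll _ _) hh ν z, Dcpe_uAll]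

/-- The compatibility identity `(★)` obtained from `[D₁, D_α] χ⁰₁ = 0`. -/
lemma star_identity {χ χ01 : BCPE m → ℝ} (hχ : FinOrd χ) (h01 : FinOrd χ01)
    {α : Fin m} (hα : α ≠ 0)
    (hD1 : ∀ z, Dcpe 0 χ01 z
      = -2 * ∑ β : {β : Fin m // β ≠ 0},
          Dcpe (β : Fin m) (fun w => uAll (β : Fin m) (Pi.single 0 1) w * χ w) z)
    (hDα : ∀ z, Dcpe α χ01 z
      = -2 * ((∑ μ : Fin m, uAll μ (Pi.single α 1) z * Dcpe μ χ z)
          + Dcpe α (fun w => (∑ β : {β : Fin m // β ≠ 0},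
              uAll (β : Fin m) (Pi.single (β : Fin m) 1) w) * χ w) z))
    (z : BCPE m) :
    ∑ β : {β : Fin m // β ≠ 0},
        uAll (β : Fin m) (Pi.single 0 1) z * Dcpe α (Dcpe (β : Fin m) χ) z
      = (∑ μ : Fin m, uAll μ (Pi.single α 1) z * Dcpe 0 (Dcpe μ χ) z)
        + (∑ β : {β : Fin m // β ≠ 0}, uAll (β : Fin m) (Pi.single (β : Fin m) 1) z)
            * Dcpe 0 (Dcpe α χ) z := by
  classical
  -- expansion of the left-hand side `D_α D₁ χ⁰₁`
  have hterm : ∀ β : {β : Fin m // β ≠ 0},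
      Dcpe α (Dcpe (β : Fin m) (fun w => uAll (β : Fin m) (Pi.single 0 1) w * χ w)) z
        = uAll (β : Fin m) (Pi.single 0 1 + Pi.single (β : Fin m) 1 + Pi.single α 1) z * χ z
          + uAll (β : Fin m) (Pi.single 0 1 + Pi.single (β : Fin m) 1) z * Dcpe α χ z
          + (uAll (β : Fin m) (Pi.single α 1 + Pi.single 0 1) z * Dcpe (β : Fin m) χ z
            + uAll (β : Fin m) (Pi.single 0 1) z * Dcpe α (Dcpe (β : Fin m) χ) z) := by
    intro β
    have hG : Dcpe (β : Fin m) (fun w => uAll (β : Fin m) (Pi.single 0 1) w * χ w)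
        = fun w => uAll (β : Fin m) (Pi.single 0 1 + Pi.single (β : Fin m) 1) w * χ w
            + uAll (β : Fin m) (Pi.single 0 1) w * Dcpe (β : Fin m) χ w :=
      funext fun w => Dcpe_uAll_mul hχ _ _ _ w
    rw [hG, Dcpe_add ((finOrd_uAll _ _).mul hχ) ((finOrd_uAll _ _).mul (hχ.dcpe _)) α z,
      Dcpe_uAll_mul hχ α _ _ z, Dcpe_uAll_mul (hχ.dcpe _) α _ _ z]
    rw [uAll_congr (β : Fin m)
      (show (Pi.single 0 1 + Pi.single α 1 : MIdx m) = Pi.single α 1 + Pi.single 0 1 from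
        add_comm _ _) z]
  have hL : Dcpe α (Dcpe 0 χ01) z
      = -2 * ∑ β : {β : Fin m // β ≠ 0},
          (uAll (β : Fin m) (Pi.single 0 1 + Pi.single (β : Fin m) 1 + Pi.single α 1) z * χ z
            + uAll (β : Fin m) (Pi.single 0 1 + Pi.single (β : Fin m) 1) z * Dcpe α χ z
            + (uAll (β : Fin m) (Pi.single α 1 + Pi.single 0 1) z * Dcpe (β : Fin m) χ z
              + uAll (β : Fin m) (Pi.single 0 1) z * Dcpe α (Dcpe (β : Fin m) χ) z)) := by
    have h1 : Dcpe 0 χ01 = fun w => -2 * ∑ β : {β : Fin m // β ≠ 0},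
        Dcpe (β : Fin m) (fun v => uAll (β : Fin m) (Pi.single 0 1) v * χ v) w :=
      funext hD1
    rw [h1, Dcpe_const_mul (FinOrd.fintypeSum fun β =>
      ((finOrd_uAll _ _).mul hχ).dcpe _) (-2) α z]
    congr 1
    rw [Dcpe_fintypeSum (fun β => ((finOrd_uAll _ _).mul hχ).dcpe _) α z]
    exact Finset.sum_congr rfl fun β _ => hterm β
  -- expansion of the right-hand side `D₁ D_α χ⁰₁`
  have hP : FinOrd (fun w => ∑ μ : Fin m, uAll μ (Pi.single α 1) w * Dcpe μ χ w) :=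
    FinOrd.fintypeSum fun μ => (finOrd_uAll _ _).mul (hχ.dcpe μ)
  have hSfun : FinOrd (fun w => (∑ β : {β : Fin m // β ≠ 0},
      uAll (β : Fin m) (Pi.single (β : Fin m) 1) w) * χ w) :=
    (FinOrd.fintypeSum fun β => finOrd_uAll _ _).mul hχ
  have hDP : Dcpe 0 (fun w => ∑ μ : Fin m, uAll μ (Pi.single α 1) w * Dcpe μ χ w) z
      = (uAll 0 (Pi.single α 1 + Pi.single 0 1) z * Dcpe 0 χ z
          + ∑ β : {β : Fin m // β ≠ 0},
              uAll (β : Fin m) (Pi.single α 1 + Pi.single 0 1) z * Dcpe (β : Fin m) χ z)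
        + ∑ μ : Fin m, uAll μ (Pi.single α 1) z * Dcpe 0 (Dcpe μ χ) z := by
    rw [Dcpe_fintypeSum (fun μ => (finOrd_uAll _ _).mul (hχ.dcpe μ)) 0 z]
    have : ∀ μ : Fin m, Dcpe 0 (fun w => uAll μ (Pi.single α 1) w * Dcpe μ χ w) z
        = uAll μ (Pi.single α 1 + Pi.single 0 1) z * Dcpe μ χ z
          + uAll μ (Pi.single α 1) z * Dcpe 0 (Dcpe μ χ) z :=
      fun μ => Dcpe_uAll_mul (hχ.dcpe μ) 0 μ _ z
    rw [Finset.sum_congr rfl fun μ _ => this μ, Finset.sum_add_distrib]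
    congr 1
    exact sum_split_fin _
  have hQfun : Dcpe α (fun w => (∑ β : {β : Fin m // β ≠ 0},
        uAll (β : Fin m) (Pi.single (β : Fin m) 1) w) * χ w)
      = fun w => (∑ β : {β : Fin m // β ≠ 0},
            uAll (β : Fin m) (Pi.single (β : Fin m) 1 + Pi.single α 1) w) * χ w
          + (∑ β : {β : Fin m // β ≠ 0},
              uAll (β : Fin m) (Pi.single (β : Fin m) 1) w) * Dcpe α χ w := by
    funext w
    rw [Dcpe_mul (FinOrd.fintypeSum fun β => finOrd_uAll _ _) hχ α w]
    congr 2
    rw [Dcpe_fintypeSum (fun β => finOrd_uAll _ _) α w]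
    exact Finset.sum_congr rfl fun β _ => Dcpe_uAll α _ _ w
  have hDQ : Dcpe 0 (Dcpe α (fun w => (∑ β : {β : Fin m // β ≠ 0},
        uAll (β : Fin m) (Pi.single (β : Fin m) 1) w) * χ w)) z
      = ((∑ β : {β : Fin m // β ≠ 0},
            uAll (β : Fin m)
              (Pi.single 0 1 + Pi.single (β : Fin m) 1 + Pi.single α 1) z) * χ z
          + (∑ β : {β : Fin m // β ≠ 0},
              uAll (β : Fin m) (Pi.single α 1 + Pi.single (β : Fin m) 1) z) * Dcpe 0 χ z)
        + ((∑ β : {β : Fin m // β ≠ 0},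
            uAll (β : Fin m) (Pi.single 0 1 + Pi.single (β : Fin m) 1) z) * Dcpe α χ z
          + (∑ β : {β : Fin m // β ≠ 0},
              uAll (β : Fin m) (Pi.single (β : Fin m) 1) z) * Dcpe 0 (Dcpe α χ) z) := by
    rw [hQfun]
    have hT1 : FinOrd (fun w => (∑ β : {β : Fin m // β ≠ 0},
        uAll (β : Fin m) (Pi.single (β : Fin m) 1 + Pi.single α 1) w) * χ w) :=
      (FinOrd.fintypeSum fun β => finOrd_uAll _ _).mul hχ
    have hT2 : FinOrd (fun w => (∑ β : {β : Fin m // β ≠ 0},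
        uAll (β : Fin m) (Pi.single (β : Fin m) 1) w) * Dcpe α χ w) :=
      (FinOrd.fintypeSum fun β => finOrd_uAll _ _).mul (hχ.dcpe α)
    rw [Dcpe_add hT1 hT2 0 z,
      Dcpe_mul (FinOrd.fintypeSum fun β => finOrd_uAll _ _) hχ 0 z,
      Dcpe_mul (FinOrd.fintypeSum fun β => finOrd_uAll _ _) (hχ.dcpe α) 0 z]
    have hs1 : Dcpe 0 (fun w => ∑ β : {β : Fin m // β ≠ 0},
        uAll (β : Fin m) (Pi.single (β : Fin m) 1 + Pi.single α 1) w) z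
        = ∑ β : {β : Fin m // β ≠ 0},
            uAll (β : Fin m) (Pi.single 0 1 + Pi.single (β : Fin m) 1 + Pi.single α 1) z := by
      rw [Dcpe_fintypeSum (fun β => finOrd_uAll _ _) 0 z]
      refine Finset.sum_congr rfl fun β _ => ?_
      rw [Dcpe_uAll]
      exact uAll_congr _ (by abel) z
    have hs2 : Dcpe 0 (fun w => ∑ β : {β : Fin m // β ≠ 0},
        uAll (β : Fin m) (Pi.single (β : Fin m) 1) w) z
        = ∑ β : {β : Fin m // β ≠ 0},
            uAll (β : Fin m) (Pi.single 0 1 + Pi.single (β : Fin m) 1) z := by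
      rw [Dcpe_fintypeSum (fun β => finOrd_uAll _ _) 0 z]
      refine Finset.sum_congr rfl fun β _ => ?_
      rw [Dcpe_uAll]
      exact uAll_congr _ (by abel) z
    have hs3 : (∑ β : {β : Fin m // β ≠ 0},
        uAll (β : Fin m) (Pi.single (β : Fin m) 1 + Pi.single α 1) z)
        = ∑ β : {β : Fin m // β ≠ 0},
            uAll (β : Fin m) (Pi.single α 1 + Pi.single (β : Fin m) 1) z :=
      Finset.sum_congr rfl fun β _ => uAll_congr _ (add_comm _ _) z
    rw [hs1, hs2, hs3]
  have hR : Dcpe 0 (Dcpe α χ01) z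
      = -2 * (((uAll 0 (Pi.single α 1 + Pi.single 0 1) z * Dcpe 0 χ z
          + ∑ β : {β : Fin m // β ≠ 0},
              uAll (β : Fin m) (Pi.single α 1 + Pi.single 0 1) z * Dcpe (β : Fin m) χ z)
        + ∑ μ : Fin m, uAll μ (Pi.single α 1) z * Dcpe 0 (Dcpe μ χ) z)
        + (((∑ β : {β : Fin m // β ≠ 0},
            uAll (β : Fin m)
              (Pi.single 0 1 + Pi.single (β : Fin m) 1 + Pi.single α 1) z) * χ z
          + (∑ β : {β : Fin m // β ≠ 0},
              uAll (β : Fin m) (Pi.single α 1 + Pi.single (β : Fin m) 1) z) * Dcpe 0 χ z)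
        + ((∑ β : {β : Fin m // β ≠ 0},
            uAll (β : Fin m) (Pi.single 0 1 + Pi.single (β : Fin m) 1) z) * Dcpe α χ z
          + (∑ β : {β : Fin m // β ≠ 0},
              uAll (β : Fin m) (Pi.single (β : Fin m) 1) z) * Dcpe 0 (Dcpe α χ) z))) := by
    have h2 : Dcpe α χ01 = fun w => -2 * ((∑ μ : Fin m, uAll μ (Pi.single α 1) w * Dcpe μ χ w)
        + Dcpe α (fun v => (∑ β : {β : Fin m // β ≠ 0},
            uAll (β : Fin m) (Pi.single (β : Fin m) 1) v) * χ v) w) :=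
      funext hDα
    have hQF : FinOrd (Dcpe α (fun v => (∑ β : {β : Fin m // β ≠ 0},
        uAll (β : Fin m) (Pi.single (β : Fin m) 1) v) * χ v)) := hSfun.dcpe α
    rw [h2, Dcpe_const_mul (hP.add hQF) (-2) 0 z]
    congr 1
    rw [Dcpe_add hP hQF 0 z, hDP, hDQ]
  -- combine via commutativity of `D₁` and `D_α` on `χ⁰₁`
  have hcomm := Dcpe_comm h01 α 0 z
  rw [hL, hR] at hcomm
  have hcont : uAll 0 (Pi.single α 1 + Pi.single 0 1) z
      = -∑ β : {β : Fin m // β ≠ 0},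
          uAll (β : Fin m) (Pi.single α 1 + Pi.single (β : Fin m) 1) z :=
    uAll_continuity (midx_single_at0 hα 1) z
  -- distribute all the sums in `hcomm` and finish linearly
  rw [Finset.sum_add_distrib, Finset.sum_add_distrib, Finset.sum_add_distrib] at hcomm
  simp only [Finset.sum_mul] at hcomm
  have hcontm : uAll 0 (Pi.single α 1 + Pi.single 0 1) z * Dcpe 0 χ z
      = -∑ β : {β : Fin m // β ≠ 0},
          uAll (β : Fin m) (Pi.single α 1 + Pi.single (β : Fin m) 1) z * Dcpe 0 χ z := by
    rw [hcont, neg_mul, Finset.sum_mul]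
  rw [Finset.sum_mul]
  linarith [hcomm, hcontm]

end WithM
end WithM2

lemma Dcpe_zero_fun {m : ℕ} [NeZero m] (μ : Fin m) (z : BCPE m) : Dcpe μ (0 : BCPE m → ℝ) z = 0 :=
  Dcpe_const μ 0 z

/-- Lemma 2: reduction of the symmetry system on `bCPE`.  Here
`D₁ = Dcpe 0`, `D_α = Dcpe α`, `Δ = Σ_μ D_μ ∘ D_μ`, `Δ′ = Σ_{α∈N} D_α ∘ D_α`, and
`u^μ_{e_ν}` is `uAll μ (Pi.single ν 1)` (with the substitution for `μ = 1`). -/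
theorem statement12 (m : ℕ) [NeZero m] (hm : 2 ≤ m)
    (χ01 χ0 χ1 : BCPE m → ℝ)
    (χa : ℕ → {α : Fin m // α ≠ 0} → BCPE m → ℝ)
    (h01 : FinOrd χ01) (h0 : FinOrd χ0) (h1 : FinOrd χ1)
    (ha : ∀ n α, FinOrd (χa n α))
    (hfin : ∃ N : ℕ, ∀ n : ℕ, N ≤ n → ∀ α, χa n α = 0) :
    (((∀ z : BCPE m,
        Dcpe 0 χ01 z
          + 2 * ∑ α : {α : Fin m // α ≠ 0},
              Dcpe (α : Fin m)
                (fun w => uAll (α : Fin m) (Pi.single 0 1) w * χ1 w) z = 0) ∧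
      (∀ (n : ℕ) (α : {α : Fin m // α ≠ 0}) (z : BCPE m),
        Dcpe 0 (χa n α) z
          + (if n = 0 then Dcpe (α : Fin m) χ01 z else 0)
          + (if n = 0 then 0 else χa (n - 1) α z)
          + 2 * ((if n = 0 then
                    Dcpe (α : Fin m)
                      (fun w => (∑ β : {β : Fin m // β ≠ 0},
                        uAll (β : Fin m) (Pi.single (β : Fin m) 1) w) * χ1 w) z
                  else 0)
                - (if n = 1 then uAll 0 (Pi.single (α : Fin m) 1) z * χ1 z else 0)
                + (if n = 0 then
                    ∑ β : {β : Fin m // β ≠ 0},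
                      Dcpe (β : Fin m)
                        (fun w => uAll (β : Fin m) (Pi.single (α : Fin m) 1) w * χ1 w) z
                  else 0)) = 0) ∧
      (∀ z : BCPE m,
        Dcpe 0 χ0 z
          - ∑ α : {α : Fin m // α ≠ 0},
              Dcpe (α : Fin m) (Dcpe (α : Fin m) χ1) z = 0) ∧
      (∀ z : BCPE m, Dcpe 0 χ1 z + χ0 z = 0))
    ↔
    ((∀ (α : {α : Fin m // α ≠ 0}) (z : BCPE m),
        χa 0 α z = 2 * uAll 0 (Pi.single (α : Fin m) 1) z * χ1 z) ∧
      (∀ n : ℕ, 1 ≤ n → ∀ (α : {α : Fin m // α ≠ 0}) (z : BCPE m), χa n α z = 0) ∧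
      (∀ z : BCPE m, χ0 z = -Dcpe 0 χ1 z) ∧
      (∀ z : BCPE m, ∑ μ : Fin m, Dcpe μ (Dcpe μ χ1) z = 0) ∧
      (∀ (α : {α : Fin m // α ≠ 0}) (z : BCPE m),
        ∑ μ : Fin m,
          (uAll μ (Pi.single 0 1) z * Dcpe μ (Dcpe (α : Fin m) χ1) z
            - uAll μ (Pi.single (α : Fin m) 1) z * Dcpe μ (Dcpe 0 χ1) z) = 0) ∧
      (∀ z : BCPE m,
        Dcpe 0 χ01 z
          = -2 * ∑ α : {α : Fin m // α ≠ 0},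
              Dcpe (α : Fin m)
                (fun w => uAll (α : Fin m) (Pi.single 0 1) w * χ1 w) z) ∧
      (∀ (α : {α : Fin m // α ≠ 0}) (z : BCPE m),
        Dcpe (α : Fin m) χ01 z
          = -2 * ((∑ μ : Fin m,
                uAll μ (Pi.single (α : Fin m) 1) z * Dcpe μ χ1 z)
              + Dcpe (α : Fin m)
                  (fun w => (∑ β : {β : Fin m // β ≠ 0},
                    uAll (β : Fin m) (Pi.single (β : Fin m) 1) w) * χ1 w) z)))) := by
  constructor
  · rintro ⟨E1, E2, E3, E4⟩
    obtain ⟨NN, hNN⟩ := hfin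
    -- `χa n = 0` for `n ≥ 1`
    have hzero : ∀ d n, 1 ≤ n → NN ≤ n + d → ∀ α, χa n α = 0 := by
      intro d
      induction d with
      | zero => intro n hn hle α; exact hNN n (by omega) α
      | succ d ih =>
        intro n hn hle α
        by_cases hcase : NN ≤ n + d
        · exact ih n hn hcase α
        · have hnext : χa (n + 1) α = 0 := ih (n + 1) (by omega) (by omega) α
          funext z
          have hE := E2 (n + 1) α z
          rw [if_neg (by omega), if_neg (by omega), if_neg (by omega), if_neg (by omega),
            if_neg (by omega)] at hE
          rw [hnext, Dcpe_zero_fun] at hE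
          have hsub : n + 1 - 1 = n := by omega
          rw [hsub] at hE
          show χa n α z = 0
          linarith
    have R2f : ∀ n, 1 ≤ n → ∀ α, χa n α = 0 := fun n hn α =>
      hzero NN n hn (by omega) α
    have R2 : ∀ n, 1 ≤ n → ∀ (α : {α : Fin m // α ≠ 0}) (z : BCPE m), χa n α z = 0 :=
      fun n hn α z => by rw [R2f n hn α]; rfl
    -- `χa 0 = 2 u¹ χ¹`
    have R1 : ∀ (α : {α : Fin m // α ≠ 0}) (z : BCPE m),
        χa 0 α z = 2 * uAll 0 (Pi.single (α : Fin m) 1) z * χ1 z := by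
      intro α z
      have hE := E2 1 α z
      rw [if_neg one_ne_zero, if_neg one_ne_zero, if_neg one_ne_zero, if_neg one_ne_zero,
        if_pos rfl] at hE
      rw [R2f 1 le_rfl α, Dcpe_zero_fun] at hE
      show χa (1 - 1) α z = _
      linarith
    have R3 : ∀ z : BCPE m, χ0 z = -Dcpe 0 χ1 z := fun z => by
      have := E4 z; linarith
    have hχ0f : χ0 = fun w => -Dcpe 0 χ1 w := funext R3
    have R4 : ∀ z : BCPE m, ∑ μ : Fin m, Dcpe μ (Dcpe μ χ1) z = 0 := by
      intro z
      rw [sum_split_fin]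
      have h00 : Dcpe 0 χ0 z = -Dcpe 0 (Dcpe 0 χ1) z := by
        rw [hχ0f, Dcpe_neg (h1.dcpe 0) 0 z]
      have := E3 z
      linarith
    have R6 : ∀ z : BCPE m, Dcpe 0 χ01 z
        = -2 * ∑ α : {α : Fin m // α ≠ 0},
            Dcpe (α : Fin m) (fun w => uAll (α : Fin m) (Pi.single 0 1) w * χ1 w) z :=
      fun z => by have := E1 z; linarith
    have R7 : ∀ (α : {α : Fin m // α ≠ 0}) (z : BCPE m),
        Dcpe (α : Fin m) χ01 z
          = -2 * ((∑ μ : Fin m, uAll μ (Pi.single (α : Fin m) 1) z * Dcpe μ χ1 z)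
              + Dcpe (α : Fin m) (fun w => (∑ β : {β : Fin m // β ≠ 0},
                  uAll (β : Fin m) (Pi.single (β : Fin m) 1) w) * χ1 w) z) := by
      intro α z
      have hE := E2 0 α z
      rw [if_pos rfl, if_pos rfl, if_pos rfl, if_pos rfl, if_neg (by omega)] at hE
      have hχa0 : χa 0 α = fun w => 2 * (uAll 0 (Pi.single (α : Fin m) 1) w * χ1 w) :=
        funext fun w => by rw [R1 α w]; ring
      rw [hχa0, Dcpe_const_mul ((finOrd_uAll _ _).mul h1) 2 0 z] at hE
      have hkey := key_identity h1 α.2 z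
      linarith
    have R5 : ∀ (α : {α : Fin m // α ≠ 0}) (z : BCPE m),
        ∑ μ : Fin m, (uAll μ (Pi.single 0 1) z * Dcpe μ (Dcpe (α : Fin m) χ1) z
          - uAll μ (Pi.single (α : Fin m) 1) z * Dcpe μ (Dcpe 0 χ1) z) = 0 := by
      intro α z
      have hstar := star_identity h1 h01 α.2
        (fun w => by have := E1 w; linarith) (fun w => R7 α w) z
      rw [Finset.sum_sub_distrib, sum_split_fin, sum_split_fin]
      have hc1 : ∑ β : {β : Fin m // β ≠ 0},
          uAll (β : Fin m) (Pi.single 0 1) z * Dcpe (β : Fin m) (Dcpe (α : Fin m) χ1) z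
          = ∑ β : {β : Fin m // β ≠ 0},
              uAll (β : Fin m) (Pi.single 0 1) z
                * Dcpe (α : Fin m) (Dcpe (β : Fin m) χ1) z :=
        Finset.sum_congr rfl fun β _ => by rw [Dcpe_comm h1]
      have hc2 : ∑ β : {β : Fin m // β ≠ 0},
          uAll (β : Fin m) (Pi.single (α : Fin m) 1) z * Dcpe (β : Fin m) (Dcpe 0 χ1) z
          = ∑ β : {β : Fin m // β ≠ 0},
              uAll (β : Fin m) (Pi.single (α : Fin m) 1) z * Dcpe 0 (Dcpe (β : Fin m) χ1) z :=
        Finset.sum_congr rfl fun β _ => by rw [Dcpe_comm h1]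
      rw [hc1, hc2]
      rw [sum_split_fin (fun μ => uAll μ (Pi.single (α : Fin m) 1) z
        * Dcpe 0 (Dcpe μ χ1) z)] at hstar
      simp only [Finset.sum_mul] at hstar
      have hu : uAll (0 : Fin m) (Pi.single 0 1) z * Dcpe 0 (Dcpe (α : Fin m) χ1) z
          = -∑ β : {β : Fin m // β ≠ 0},
              uAll (β : Fin m) (Pi.single (β : Fin m) 1) z
                * Dcpe 0 (Dcpe (α : Fin m) χ1) z := by
        rw [uAll_e1, neg_mul, Finset.sum_mul]
      linarith [hstar, hu]
    exact ⟨R1, R2, R3, R4, R5, R6, R7⟩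
  · rintro ⟨R1, R2, R3, R4, R5, R6, R7⟩
    refine ⟨fun z => by have := R6 z; linarith, ?_, ?_, fun z => by have := R3 z; linarith⟩
    · -- the χa-equations
      intro n α z
      match n with
      | 0 =>
        rw [if_pos rfl, if_pos rfl, if_pos rfl, if_pos rfl, if_neg (by omega)]
        have hχa0 : χa 0 α = fun w => 2 * (uAll 0 (Pi.single (α : Fin m) 1) w * χ1 w) :=
          funext fun w => by rw [R1 α w]; ring
        rw [hχa0, Dcpe_const_mul ((finOrd_uAll _ _).mul h1) 2 0 z]
        have hkey := key_identity h1 α.2 z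
        have := R7 α z
        linarith
      | 1 =>
        rw [if_neg one_ne_zero, if_neg one_ne_zero, if_neg one_ne_zero, if_neg one_ne_zero,
          if_pos rfl]
        have h1f : χa 1 α = 0 := funext fun w => R2 1 le_rfl α w
        rw [h1f, Dcpe_zero_fun]
        have hr : χa (1 - 1) α z = 2 * uAll 0 (Pi.single (α : Fin m) 1) z * χ1 z := R1 α z
        linarith
      | (n + 2) =>
        rw [if_neg (by omega), if_neg (by omega), if_neg (by omega), if_neg (by omega),
          if_neg (by omega)]
        have h2f : χa (n + 2) α = 0 := funext fun w => R2 (n + 2) (by omega) α w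
        rw [h2f, Dcpe_zero_fun]
        have h1v : χa (n + 2 - 1) α z = 0 := R2 (n + 1) (by omega) α z
        rw [h1v]
        ring
    · -- the wave equation
      intro z
      have hχ0f : χ0 = fun w => -Dcpe 0 χ1 w := funext R3
      have h00 : Dcpe 0 χ0 z = -Dcpe 0 (Dcpe 0 χ1) z := by
        rw [hχ0f, Dcpe_neg (h1.dcpe 0) 0 z]
      have hR4 := R4 z
      rw [sum_split_fin] at hR4
      linarith
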